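/- arXiv:2603.12137 — 5 statements merged into one kernel-verified Lean document; each statement's English description precedes it below -/
import Mathlib

section
/- For all peer susceptibilities α_1,…,α_n ∈ [0,1] and platform susceptibilities β_1,…,β_n ∈ [0,1], the spectral radius of the product Ψ_K Λ_β satisfies ρ(Ψ_K Λ_β) ≤ max_i β_i. In particular, if β_i < 1 for every i then ρ(Ψ_K Λ_β) < 1. -/
open Matrix Filter Topology

/-- Row-normalized adjacency matrix `W = deg⁻¹ A` of a simple graph. -/
noncomputable def rowNormAdj {n : ℕ} (G : SimpleGraph (Fin n)) [DecidableRel G.Adj] :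
    Matrix (Fin n) (Fin n) ℝ :=
  Matrix.of fun i j => (G.adjMatrix ℝ) i j / (G.degree i : ℝ)

/-- The multi-step influence matrix
`Ψ_K = Σ_{k=0}^{K−1} (Λ_α W)^k (I − Λ_α) + (Λ_α W)^K`. -/
noncomputable def Psi {n : ℕ} (K : ℕ) (α : Fin n → ℝ) (W : Matrix (Fin n) (Fin n) ℝ) :
    Matrix (Fin n) (Fin n) ℝ :=
  (∑ k ∈ Finset.range K, (Matrix.diagonal α * W) ^ k * (1 - Matrix.diagonal α))
    + (Matrix.diagonal α * W) ^ K
/-- The spectral radius of a real square matrix: the maximum modulus of its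
complex eigenvalues. -/
noncomputable def specRad {n : ℕ} (M : Matrix (Fin n) (Fin n) ℝ) : ℝ :=
  sSup ((fun z : ℂ => ‖z‖) '' spectrum ℂ (M.map Complex.ofReal))

/-!
The matrix `W` is nonnegative with row sums at most `1`. Writing `S = Λ_α W`, one has
`Ψ_{K+1} = Ψ_K + S^K (S - Λ_α)` and `(S - Λ_α) 𝟙 ≤ 0`, so by induction from `Ψ_0 = I` every
`Ψ_K` is nonnegative with row sums at most `1`. Hence `Ψ_K Λ_β` is nonnegative with row sums
at most `max_i β_i`, and the spectral radius is bounded by the `ℓ^∞` operator norm, which is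
the largest absolute row sum.
-/

section NonnegMatrix

variable {ι κ μ : Type*}

lemma Matrix.mulVec_mono_of_nonneg [Fintype κ] {M : Matrix ι κ ℝ} (hM : ∀ i j, 0 ≤ M i j)
    {x y : κ → ℝ} (hxy : x ≤ y) : M *ᵥ x ≤ M *ᵥ y :=
  fun i => dotProduct_le_dotProduct_of_nonneg_left hxy (hM i)

lemma Matrix.mul_apply_nonneg [Fintype κ] {M : Matrix ι κ ℝ} {N : Matrix κ μ ℝ}
    (hM : ∀ i j, 0 ≤ M i j) (hN : ∀ i j, 0 ≤ N i j) (i : ι) (j : μ) : 0 ≤ (M * N) i j :=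
  Finset.sum_nonneg fun k _ => mul_nonneg (hM i k) (hN k j)

lemma Matrix.diagonal_mul_apply_nonneg [Fintype ι] [DecidableEq ι] {d : ι → ℝ}
    (hd : ∀ i, 0 ≤ d i) {M : Matrix ι κ ℝ} (hM : ∀ i j, 0 ≤ M i j) (i : ι) (j : κ) :
    0 ≤ (diagonal d * M) i j := by
  rw [diagonal_mul]
  exact mul_nonneg (hd i) (hM i j)

lemma Matrix.mul_diagonal_mulVec_one_le [Fintype ι] [DecidableEq ι]
    {P : Matrix ι ι ℝ} (hP : ∀ i j, 0 ≤ P i j) (hP1 : P *ᵥ 1 ≤ 1) {β : ι → ℝ} {c : ℝ}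
    (hc : 0 ≤ c) (hβ : ∀ i, β i ≤ c) : (P * diagonal β) *ᵥ 1 ≤ c • 1 :=
  calc (P * diagonal β) *ᵥ 1 = P *ᵥ β := by
        rw [← mulVec_mulVec]
        congr 1
        ext i
        simp [mulVec_diagonal]
    _ ≤ P *ᵥ (c • 1) := mulVec_mono_of_nonneg hP fun i => by simpa using hβ i
    _ = c • (P *ᵥ 1) := mulVec_smul P c 1
    _ ≤ c • 1 := smul_le_smul_of_nonneg_left hP1 hc

end NonnegMatrix

section Psi

variable {n : ℕ} {α : Fin n → ℝ} {W : Matrix (Fin n) (Fin n) ℝ}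

lemma Psi_zero : Psi 0 α W = 1 := by
  simp [Psi]

lemma Psi_succ (K : ℕ) :
    Psi (K + 1) α W = Psi K α W + (diagonal α * W) ^ K * (diagonal α * W - diagonal α) := by
  simp only [Psi, Finset.sum_range_succ, pow_succ]
  noncomm_ring

lemma Psi_nonneg (hα : ∀ i, α i ∈ Set.Icc (0 : ℝ) 1) (hW : ∀ i j, 0 ≤ W i j) (K : ℕ)
    (i j : Fin n) : 0 ≤ Psi K α W i j := by
  have hS := diagonal_mul_apply_nonneg (fun i => (hα i).1) hW
  have hI : ∀ i j, 0 ≤ (1 - diagonal α : Matrix (Fin n) (Fin n) ℝ) i j := by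
    intro i j
    rw [Matrix.sub_apply, one_apply, diagonal_apply]
    split_ifs
    · exact sub_nonneg.2 (hα i).2
    · simp
  rw [Psi, Matrix.add_apply, Matrix.sum_apply]
  exact add_nonneg
    (Finset.sum_nonneg fun k _ => mul_apply_nonneg (pow_apply_nonneg hS k) hI i j)
    (pow_apply_nonneg hS K i j)

lemma Psi_mulVec_one_le (hα : ∀ i, 0 ≤ α i) (hW : ∀ i j, 0 ≤ W i j) (hW1 : W *ᵥ 1 ≤ 1)
    (K : ℕ) : Psi K α W *ᵥ 1 ≤ 1 := by
  induction K with
  | zero => rw [Psi_zero, one_mulVec]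
  | succ K ih =>
    have hdrift : (diagonal α * W - diagonal α) *ᵥ 1 ≤ 0 := by
      intro i
      rw [Pi.zero_apply, sub_mulVec, Pi.sub_apply, ← mulVec_mulVec, mulVec_diagonal,
        mulVec_diagonal, sub_nonpos]
      simpa using mul_le_mul_of_nonneg_left (hW1 i) (hα i)
    calc Psi (K + 1) α W *ᵥ 1
        = Psi K α W *ᵥ 1 + (diagonal α * W) ^ K *ᵥ ((diagonal α * W - diagonal α) *ᵥ 1) := by
          rw [Psi_succ, add_mulVec, mulVec_mulVec]
      _ ≤ 1 + (diagonal α * W) ^ K *ᵥ 0 := by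
          gcongr
          exact mulVec_mono_of_nonneg (pow_apply_nonneg (diagonal_mul_apply_nonneg hα hW) K) hdrift
      _ = 1 := by rw [mulVec_zero, add_zero]

end Psi

section RowNormAdj

variable {n : ℕ} (G : SimpleGraph (Fin n)) [DecidableRel G.Adj]

lemma rowNormAdj_eq_diagonal_mul :
    rowNormAdj G = diagonal (fun i => (G.degree i : ℝ)⁻¹) * G.adjMatrix ℝ := by
  ext i j
  rw [diagonal_mul]
  simp [rowNormAdj, div_eq_inv_mul]

lemma rowNormAdj_nonneg (i j : Fin n) : 0 ≤ rowNormAdj G i j := by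
  rw [rowNormAdj_eq_diagonal_mul]
  refine diagonal_mul_apply_nonneg (fun _ => by positivity) (fun i j => ?_) i j
  rw [SimpleGraph.adjMatrix_apply]
  split_ifs <;> norm_num

-- An isolated vertex gives a zero row, since `0⁻¹ = 0`.
lemma rowNormAdj_mulVec_one_le : rowNormAdj G *ᵥ 1 ≤ 1 := by
  intro i
  rw [rowNormAdj_eq_diagonal_mul, ← mulVec_mulVec, mulVec_diagonal,
    SimpleGraph.adjMatrix_mulVec_apply]
  simpa using inv_mul_le_one_of_le₀ le_rfl (Nat.cast_nonneg (G.degree i))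

end RowNormAdj

lemma specRad_le_of_sum_abs_le {n : ℕ} {M : Matrix (Fin n) (Fin n) ℝ} {c : ℝ} (hc : 0 ≤ c)
    (hM : ∀ i, ∑ j, |M i j| ≤ c) : specRad M ≤ c := by
  rcases isEmpty_or_nonempty (Fin n) with _ | _
  · simpa [specRad, spectrum.of_subsingleton] using hc
  let := Matrix.linftyOpNormedRing (n := Fin n) (α := ℂ)
  let := Matrix.linftyOpNormedAlgebra (R := ℂ) (n := Fin n) (α := ℂ)
  have hnorm : ‖M.map Complex.ofReal‖ ≤ c := by
    rw [linfty_opNorm_def, ← Real.coe_toNNReal c hc, NNReal.coe_le_coe]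
    refine Finset.sup_le fun i _ => ?_
    rw [← NNReal.coe_le_coe, NNReal.coe_sum, Real.coe_toNNReal c hc]
    simpa using hM i
  refine Real.sSup_le ?_ hc
  rintro _ ⟨z, hz, rfl⟩
  exact (spectrum.norm_le_norm_of_mem hz).trans hnorm

lemma specRad_le_of_nonneg_of_mulVec_one_le {n : ℕ} {M : Matrix (Fin n) (Fin n) ℝ} {c : ℝ}
    (hM : ∀ i j, 0 ≤ M i j) (hc : 0 ≤ c) (hM1 : M *ᵥ 1 ≤ c • 1) : specRad M ≤ c := by
  refine specRad_le_of_sum_abs_le hc fun i => ?_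
  simpa [abs_of_nonneg (hM i _), mulVec, dotProduct] using hM1 i

lemma Real.iSup_lt_of_forall_lt {ι : Type*} [Finite ι] {f : ι → ℝ} {a : ℝ} (ha : 0 < a)
    (hf : ∀ i, f i < a) : ⨆ i, f i < a := by
  cases isEmpty_or_nonempty ι
  · rwa [Real.iSup_of_isEmpty]
  · obtain ⟨i, hi⟩ := Finite.exists_max f
    exact (ciSup_le hi).trans_lt (hf i)

theorem specRad_psi_diagonal_le_general {n : ℕ} (G : SimpleGraph (Fin n))
    [DecidableRel G.Adj] (K : ℕ)
    (α β : Fin n → ℝ) (hα : ∀ i, α i ∈ Set.Icc (0 : ℝ) 1)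
    (hβ : ∀ i, β i ∈ Set.Icc (0 : ℝ) 1) :
    (specRad (Psi K α (rowNormAdj G) * Matrix.diagonal β) ≤ ⨆ i, β i) ∧
      ((∀ i, β i < 1) → specRad (Psi K α (rowNormAdj G) * Matrix.diagonal β) < 1) := by
  have hB : 0 ≤ ⨆ i, β i := Real.iSup_nonneg fun i => (hβ i).1
  have hβB : ∀ i, β i ≤ ⨆ i, β i := le_ciSup (Set.finite_range β).bddAbove
  have hΨ := Psi_nonneg hα (rowNormAdj_nonneg G) K
  have hΨ1 := Psi_mulVec_one_le (fun i => (hα i).1) (rowNormAdj_nonneg G)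
    (rowNormAdj_mulVec_one_le G) K
  have hρ : specRad (Psi K α (rowNormAdj G) * diagonal β) ≤ ⨆ i, β i := by
    refine specRad_le_of_nonneg_of_mulVec_one_le (fun i j => ?_) hB
      (mul_diagonal_mulVec_one_le hΨ hΨ1 hB hβB)
    rw [mul_diagonal]
    exact mul_nonneg (hΨ i j) (hβ j).1
  exact ⟨hρ, fun hβ1 => hρ.trans_lt (Real.iSup_lt_of_forall_lt one_pos hβ1)⟩

/-- `ρ(Ψ_K Λ_β) ≤ max_i β_i`; in particular if `β_i < 1` for all
`i` then `ρ(Ψ_K Λ_β) < 1`. -/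
theorem specRad_psi_diagonal_le {n : ℕ} (hn : 2 ≤ n) (G : SimpleGraph (Fin n))
    [DecidableRel G.Adj] (hG : G.Connected) (K : ℕ) (hK : 1 ≤ K)
    (α β : Fin n → ℝ) (hα : ∀ i, α i ∈ Set.Icc (0 : ℝ) 1)
    (hβ : ∀ i, β i ∈ Set.Icc (0 : ℝ) 1) :
    (specRad (Psi K α (rowNormAdj G) * Matrix.diagonal β) ≤ ⨆ i, β i) ∧
      ((∀ i, β i < 1) → specRad (Psi K α (rowNormAdj G) * Matrix.diagonal β) < 1) :=
  specRad_psi_diagonal_le_general G K α β hα hβ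
end

section
/- (Mean invariance at equilibrium.) Suppose G is d-regular (so W = A/d is symmetric), α_i ≡ α ∈ (0,1) for all i, and β_i ≡ β ∈ (0,1) for all i. Then I − βΨ_K is invertible, the stable point equals x_PS = (1 − β)(I − βΨ_K)^{−1} Ψ_K x*, and Mean(x_PS) = (1/n)·1ᵀx* = Mean(x*). -/
open Matrix Filter Topology

/-- `Ψ_K` with homogeneous susceptibility is a combination of powers of `W`. -/
lemma Psi_const {n K : ℕ} (α : ℝ) (W : Matrix (Fin n) (Fin n) ℝ) :
    Psi K (fun _ => α) W
      = (∑ k ∈ Finset.range K, (α ^ k * (1 - α)) • W ^ k) + α ^ K • W ^ K := by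
  have hdiag : (Matrix.diagonal (fun _ : Fin n => α)) = α • (1 : Matrix (Fin n) (Fin n) ℝ) := by
    ext i j
    by_cases h : i = j <;> simp [Matrix.diagonal_apply, Matrix.one_apply, h]
  unfold Psi
  rw [hdiag, smul_mul_assoc, one_mul]
  congr 1
  · refine Finset.sum_congr rfl fun k _ => ?_
    rw [smul_pow, Matrix.mul_sub, Matrix.mul_one, mul_smul_comm, Matrix.mul_one, smul_smul,
      ← sub_smul]
    congr 1
    ring
  · rw [smul_pow]

/-- mean invariance at equilibrium.  On a `d`-regular graph with
homogeneous susceptibilities `α, β ∈ (0,1)`, `I − βΨ_K` is invertible, the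
stable point equals `x_PS = (1 − β)(I − βΨ_K)⁻¹ Ψ_K x*`, and
`Mean(x_PS) = Mean(x*)`. -/
theorem mean_invariance_at_equilibrium {n : ℕ} (hn : 2 ≤ n)
    (G : SimpleGraph (Fin n)) [DecidableRel G.Adj] (hG : G.Connected)
    (d : ℕ) (hd : 0 < d) (hreg : ∀ i, G.degree i = d)
    (K : ℕ) (hK : 1 ≤ K)
    (α β : ℝ) (hα : α ∈ Set.Ioo (0 : ℝ) 1) (hβ : β ∈ Set.Ioo (0 : ℝ) 1)
    (xstar : Fin n → ℝ) (hx : ∀ i, xstar i ∈ Set.Icc (0 : ℝ) 1) :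
    let P := Psi K (fun _ => α) (rowNormAdj G)
    let xPS : Fin n → ℝ := (1 - β) • (((1 - β • P)⁻¹ * P) *ᵥ xstar)
    IsUnit (1 - β • P) ∧
    xPS = P *ᵥ ((1 - β) • xstar + β • xPS) ∧
    (∑ i, xPS i) / n = (∑ i, xstar i) / n := by
  intro P xPS
  set W : Matrix (Fin n) (Fin n) ℝ := rowNormAdj G with hW
  have hd' : (0 : ℝ) < d := by exact_mod_cast hd
  -- entrywise description of W
  have hWapp : ∀ i j, W i j = (if G.Adj i j then (1:ℝ) else 0) / d := by
    intro i j
    simp [hW, rowNormAdj, hreg i, SimpleGraph.adjMatrix_apply]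
  -- nonnegativity of W
  have hWnn : ∀ i j, (0:ℝ) ≤ W i j := by
    intro i j
    rw [hWapp]
    positivity
  -- row sums of W
  have hWrowsum : ∀ i, ∑ j, W i j = 1 := by
    intro i
    have hdeg : ∑ j, (if G.Adj i j then (1:ℝ) else 0) = (G.degree i : ℝ) := by
      rw [Finset.sum_boole]
      simp [SimpleGraph.degree, SimpleGraph.neighborFinset_eq_filter]
    simp_rw [hWapp, div_eq_mul_inv, ← Finset.sum_mul, hdeg, hreg i]
    field_simp
  -- column sums of W
  have hWcolsum : ∀ j, ∑ i, W i j = 1 := by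
    intro j
    have : ∀ i, W i j = W j i := by
      intro i
      rw [hWapp, hWapp]
      simp only [G.adj_comm i j]
    simp_rw [this]
    exact hWrowsum j
  -- the same for powers of W
  have hWknn : ∀ k i j, (0:ℝ) ≤ (W ^ k) i j := by
    intro k
    induction k with
    | zero => intro i j; by_cases h : i = j <;> simp [Matrix.one_apply, h]
    | succ m ih =>
      intro i j
      rw [pow_succ, Matrix.mul_apply]
      exact Finset.sum_nonneg fun l _ => mul_nonneg (ih i l) (hWnn l j)
  have hWkrowsum : ∀ k i, ∑ j, (W ^ k) i j = 1 := by
    intro k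
    induction k with
    | zero => intro i; simp [Matrix.one_apply]
    | succ m ih =>
      intro i
      simp_rw [pow_succ, Matrix.mul_apply]
      rw [Finset.sum_comm]
      simp_rw [← Finset.mul_sum, hWrowsum, mul_one]
      exact ih i
  have hWkcolsum : ∀ k j, ∑ i, (W ^ k) i j = 1 := by
    intro k
    induction k with
    | zero => intro j; simp [Matrix.one_apply]
    | succ m ih =>
      intro j
      simp_rw [pow_succ, Matrix.mul_apply]
      rw [Finset.sum_comm]
      simp_rw [← Finset.sum_mul, ih, one_mul]
      exact hWcolsum j
  -- geometric sum identity
  have hgeo : (∑ k ∈ Finset.range K, α ^ k * (1 - α)) + α ^ K = 1 := by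
    have h := geom_sum_mul α K
    have h2 : (∑ k ∈ Finset.range K, α ^ k * (1 - α))
        = (∑ k ∈ Finset.range K, α ^ k) * (1 - α) := (Finset.sum_mul _ _ _).symm
    rw [h2]
    linear_combination -h
  -- entrywise description of P
  have hPapp : ∀ i j, P i j
      = (∑ k ∈ Finset.range K, (α ^ k * (1 - α)) * (W ^ k) i j) + α ^ K * (W ^ K) i j := by
    intro i j
    show Psi K (fun _ => α) W i j = _
    rw [Psi_const]
    simp [Matrix.add_apply, Matrix.sum_apply, Matrix.smul_apply, smul_eq_mul]
  have hαnn : ∀ k : ℕ, (0:ℝ) ≤ α ^ k * (1 - α) := fun k =>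
    mul_nonneg (pow_nonneg hα.1.le k) (by linarith [hα.2])
  -- nonnegativity of P
  have hPnn : ∀ i j, (0:ℝ) ≤ P i j := by
    intro i j
    rw [hPapp]
    have h1 : (0:ℝ) ≤ ∑ k ∈ Finset.range K, (α ^ k * (1 - α)) * (W ^ k) i j :=
      Finset.sum_nonneg fun k _ => mul_nonneg (hαnn k) (hWknn k i j)
    have h2 : (0:ℝ) ≤ α ^ K * (W ^ K) i j :=
      mul_nonneg (pow_nonneg hα.1.le K) (hWknn K i j)
    linarith
  -- row sums of P
  have hProwsum : ∀ i, ∑ j, P i j = 1 := by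
    intro i
    simp_rw [hPapp, Finset.sum_add_distrib]
    rw [Finset.sum_comm]
    simp_rw [← Finset.mul_sum, hWkrowsum, mul_one]
    exact hgeo
  -- column sums of P
  have hPcolsum : ∀ j, ∑ i, P i j = 1 := by
    intro j
    simp_rw [hPapp, Finset.sum_add_distrib]
    rw [Finset.sum_comm]
    simp_rw [← Finset.mul_sum, hWkcolsum, mul_one]
    exact hgeo
  set M : Matrix (Fin n) (Fin n) ℝ := 1 - β • P with hM
  have hMapp : ∀ i j, M i j = (if i = j then (1:ℝ) else 0) - β * P i j := by
    intro i j
    simp [hM, Matrix.sub_apply, Matrix.smul_apply, Matrix.one_apply, smul_eq_mul]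
  -- P diagonal entries are at most 1
  have hPdiag : ∀ i, P i i ≤ 1 := by
    intro i
    have := Finset.single_le_sum (f := fun j => P i j) (fun j _ => hPnn i j) (Finset.mem_univ i)
    rw [hProwsum i] at this
    exact this
  -- determinant nonzero via diagonal dominance
  have hMdet : M.det ≠ 0 := by
    apply det_ne_zero_of_sum_row_lt_diag
    intro k
    have hoff : ∀ j ∈ Finset.univ.erase k, ‖M k j‖ = β * P k j := by
      intro j hj
      have hjk : j ≠ k := (Finset.mem_erase.mp hj).1
      rw [hMapp, if_neg (Ne.symm hjk), zero_sub, norm_neg, Real.norm_eq_abs,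
        abs_of_nonneg (mul_nonneg hβ.1.le (hPnn k j))]
    rw [Finset.sum_congr rfl hoff]
    have hsum : ∑ j ∈ Finset.univ.erase k, β * P k j = β * (1 - P k k) := by
      rw [← Finset.mul_sum, Finset.sum_erase_eq_sub (Finset.mem_univ k), hProwsum k]
    rw [hsum, hMapp, if_pos rfl, Real.norm_eq_abs]
    have h1 : β * P k k ≤ β := by
      nlinarith [hPnn k k, hPdiag k, hβ.1]
    rw [abs_of_nonneg (by nlinarith [hβ.2] : (0:ℝ) ≤ 1 - β * P k k)]
    nlinarith [hPnn k k, hPdiag k, hβ.1, hβ.2]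
  have hMdetUnit : IsUnit M.det := isUnit_iff_ne_zero.mpr hMdet
  have hUnit : IsUnit M := (Matrix.isUnit_iff_isUnit_det M).mpr hMdetUnit
  have hMQ : M * M⁻¹ = 1 := Matrix.mul_nonsing_inv M hMdetUnit
  have hQM : M⁻¹ * M = 1 := Matrix.nonsing_inv_mul M hMdetUnit
  have hcomm : M * P = P * M := by
    rw [hM]
    simp [sub_mul, mul_sub, smul_mul_assoc, mul_smul_comm]
  -- the key matrix identity
  have key : M⁻¹ * P = P + β • (P * (M⁻¹ * P)) := by
    have h1 : M * (M⁻¹ * P) = P := by rw [← mul_assoc, hMQ, one_mul]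
    have h2 : M * (P + β • (P * (M⁻¹ * P))) = P := by
      rw [mul_add, mul_smul_comm]
      have h3 : M * (P * (M⁻¹ * P)) = P * P := by
        calc M * (P * (M⁻¹ * P)) = (M * P) * M⁻¹ * P := by rw [← mul_assoc, ← mul_assoc]
        _ = (P * M) * M⁻¹ * P := by rw [hcomm]
        _ = P * (M * M⁻¹) * P := by rw [mul_assoc P M M⁻¹]
        _ = P * P := by rw [hMQ, mul_one]
      rw [h3, hcomm, hM]
      rw [mul_sub, mul_one, mul_smul_comm]
      abel
    have h4 := congrArg (fun X => M⁻¹ * X) (h1.trans h2.symm)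
    simpa [← mul_assoc, hQM] using h4
  refine ⟨hUnit, ?_, ?_⟩
  · -- fixed point equation
    show xPS = P *ᵥ ((1 - β) • xstar + β • xPS)
    have hxPS : xPS = (1 - β) • ((M⁻¹ * P) *ᵥ xstar) := rfl
    rw [hxPS]
    rw [Matrix.mulVec_add, Matrix.mulVec_smul, Matrix.mulVec_smul]
    rw [Matrix.mulVec_smul] -- may be redundant
    conv_lhs => rw [key]
    rw [Matrix.add_mulVec, Matrix.smul_mulVec, ← Matrix.mulVec_mulVec]
    funext i
    simp only [Pi.add_apply, Pi.smul_apply, smul_eq_mul]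
    ring
  · -- mean invariance
    set y : Matrix (Fin n) (Fin n) ℝ := M⁻¹ * P with hy
    have hβ1 : (1:ℝ) - β ≠ 0 := by linarith [hβ.2]
    have hMcolsum : ∀ j, ∑ i, M i j = 1 - β := by
      intro j
      simp_rw [hMapp]
      rw [Finset.sum_sub_distrib, ← Finset.mul_sum, hPcolsum j]
      simp
    have hMy : M * y = P := by rw [hy, ← mul_assoc, hMQ, one_mul]
    have hycolsum : ∀ j, ∑ i, y i j = (1 - β)⁻¹ := by
      intro j
      have e1 : ∑ i, (M * y) i j = (1 - β) * ∑ l, y l j := by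
        simp_rw [Matrix.mul_apply]
        rw [Finset.sum_comm]
        simp_rw [← Finset.sum_mul, hMcolsum, ← Finset.mul_sum]
      have e2 : ∑ i, (M * y) i j = 1 := by rw [hMy]; exact hPcolsum j
      rw [e2] at e1
      field_simp at e1 ⊢
      linarith [e1]
    have hsum : ∑ i, xPS i = ∑ i, xstar i := by
      have : ∀ i, xPS i = (1 - β) * ∑ j, y i j * xstar j := by
        intro i
        show ((1 - β) • (y *ᵥ xstar)) i = _
        simp [Matrix.mulVec, dotProduct, smul_eq_mul]
      simp_rw [this, ← Finset.mul_sum]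
      rw [Finset.sum_comm]
      simp_rw [← Finset.sum_mul, hycolsum]
      rw [← Finset.mul_sum, ← mul_assoc, mul_inv_cancel₀ hβ1, one_mul]
    rw [hsum]
end

section
/- (Homogenizing force of performativity: variance decreases in platform susceptibility.) Suppose G is d-regular (so W = A/d is symmetric), α_i ≡ α ∈ (0,1) for all i, and x* is not a constant vector (Var(x*) > 0). For β ∈ (0,1) let x_PS(β) = (1 − β)(I − βΨ_∞)^{−1} Ψ_∞ x* (well-defined since ρ(βΨ_∞) < 1). Then the function β ↦ Var(x_PS(β)) is differentiable on (0,1) and its derivative is strictly negative at every β ∈ (0,1). -/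
open Matrix Filter Topology

/-- The infinite-horizon influence matrix `Ψ_∞ = Σ_{k=0}^∞ (Λ_α W)^k (I − Λ_α)`. -/
noncomputable def PsiInf {n : ℕ} (α : Fin n → ℝ) (W : Matrix (Fin n) (Fin n) ℝ) :
    Matrix (Fin n) (Fin n) ℝ :=
  ∑' k : ℕ, (Matrix.diagonal α * W) ^ k * (1 - Matrix.diagonal α)

/-- `Mean(x) = (1/n) Σ_i x_i`. -/
noncomputable def meanV {n : ℕ} (x : Fin n → ℝ) : ℝ := (∑ i, x i) / n

/-- `Var(x) = Σ_i (x_i − Mean(x))²`. -/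
noncomputable def varV {n : ℕ} (x : Fin n → ℝ) : ℝ := ∑ i, (x i - meanV x) ^ 2

/-!
On a `d`-regular graph `W` is symmetric and stochastic and `Ψ_∞ = (1 - α)(I - αW)⁻¹`, so
everything is diagonal in an orthonormal eigenbasis `b_j` of `W`. An eigenvalue `λ ≤ 1` of `W`
becomes the eigenvalue `μ = (1 - α)/(1 - αλ) ∈ (0, 1]` of `Ψ_∞`, and the map `x* ↦ x_PS(β)` acts
on `b_j` by `(1 - β)μ/(1 - βμ)`, which is `1` for `μ = 1` and strictly decreasing in `β` for
`μ < 1`. Eigenvectors with `λ ≠ 1` are orthogonal to the constant vector, so this map preserves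
the sum of the entries, and Parseval gives
`Var(x_PS(β)) = Σ_j ((1 - β)μ_j/(1 - βμ_j))² c_j² - (Σ_i x*_i)²/n` with `c_j = ⟪b_j, x*⟫`.
By the maximum principle on the connected graph a non-constant `x*` is not fixed by `W`, so some
`c_j ≠ 0` belongs to an eigenvalue `λ_j ≠ 1`, and its term makes the derivative negative.
-/

open scoped Matrix.Norms.Operator

namespace OrthonormalBasis

variable {ι : Type*} [Fintype ι] {b : OrthonormalBasis ι ℝ (EuclideanSpace ℝ ι)}
  {N : Matrix ι ι ℝ} {ν : ι → ℝ}

lemma eq_sum_repr_smul (b : OrthonormalBasis ι ℝ (EuclideanSpace ℝ ι)) (v : ι → ℝ) :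
    v = ∑ j, b.repr (WithLp.toLp 2 v) j • ⇑(b j) := by
  conv_lhs => rw [← WithLp.ofLp_toLp 2 v, ← b.sum_repr (WithLp.toLp 2 v)]
  simp [WithLp.ofLp_sum]

lemma sum_sq_sum_smul_apply (b : OrthonormalBasis ι ℝ (EuclideanSpace ℝ ι)) (a : ι → ℝ) :
    ∑ i, (∑ j, a j • ⇑(b j)) i ^ 2 = ∑ j, a j ^ 2 := by
  calc ∑ i, (∑ j, a j • ⇑(b j)) i ^ 2 = ‖∑ j, a j • b j‖ ^ 2 := by
        simp [EuclideanSpace.real_norm_sq_eq, WithLp.ofLp_sum]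
    _ = ‖b.repr.symm (WithLp.toLp 2 a)‖ ^ 2 := by rw [← b.sum_repr_symm]
    _ = ‖WithLp.toLp 2 a‖ ^ 2 := by rw [LinearIsometryEquiv.norm_map]
    _ = ∑ j, a j ^ 2 := by simp [EuclideanSpace.real_norm_sq_eq]

lemma mulVec_eq_sum_smul (hN : ∀ j, N *ᵥ ⇑(b j) = ν j • ⇑(b j)) (v : ι → ℝ) :
    N *ᵥ v = ∑ j, (ν j * b.repr (WithLp.toLp 2 v) j) • ⇑(b j) := by
  conv_lhs => rw [b.eq_sum_repr_smul v]
  simp [mulVec_sum, mulVec_smul, hN, smul_smul, mul_comm]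

lemma sum_sq_mulVec_eq (hN : ∀ j, N *ᵥ ⇑(b j) = ν j • ⇑(b j)) (v : ι → ℝ) :
    ∑ i, (N *ᵥ v) i ^ 2 = ∑ j, (ν j * b.repr (WithLp.toLp 2 v) j) ^ 2 := by
  rw [mulVec_eq_sum_smul hN, sum_sq_sum_smul_apply]

lemma sum_mulVec_eq_sum (hN : ∀ j, N *ᵥ ⇑(b j) = ν j • ⇑(b j))
    (h : ∀ j, ν j = 1 ∨ ∑ i, b j i = 0) (v : ι → ℝ) : ∑ i, (N *ᵥ v) i = ∑ i, v i := by
  conv_rhs => rw [b.eq_sum_repr_smul v]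
  rw [mulVec_eq_sum_smul hN]
  simp only [Finset.sum_apply, Pi.smul_apply, smul_eq_mul]
  rw [Finset.sum_comm]
  conv_rhs => rw [Finset.sum_comm]
  refine Finset.sum_congr rfl fun j _ => ?_
  rcases h j with h | h <;> simp [h, mul_assoc, ← Finset.mul_sum]

lemma isUnit_of_mulVec_eq_smul [DecidableEq ι] (hN : ∀ j, N *ᵥ ⇑(b j) = ν j • ⇑(b j))
    (hν : ∀ j, ν j ≠ 0) : IsUnit N := by
  rw [← mulVec_injective_iff_isUnit]
  intro v w hvw
  have hsq : ∑ j, (ν j * b.repr (WithLp.toLp 2 (v - w)) j) ^ 2 = 0 := by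
    rw [← sum_sq_mulVec_eq hN, mulVec_sub, hvw, sub_self]
    simp
  have hrepr : ∀ j, b.repr (WithLp.toLp 2 (v - w)) j = 0 := fun j => by
    simpa [hν j] using (Finset.sum_eq_zero_iff_of_nonneg fun j _ => sq_nonneg _).mp hsq j
      (Finset.mem_univ j)
  rw [← sub_eq_zero, b.eq_sum_repr_smul (v - w)]
  simp only [hrepr, zero_smul, Finset.sum_const_zero]

lemma exists_repr_ne_zero_of_mulVec_ne_self (hN : ∀ j, N *ᵥ ⇑(b j) = ν j • ⇑(b j))
    {v : ι → ℝ} (hv : N *ᵥ v ≠ v) : ∃ j, b.repr (WithLp.toLp 2 v) j ≠ 0 ∧ ν j ≠ 1 := by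
  by_contra! h
  refine hv ?_
  conv_rhs => rw [b.eq_sum_repr_smul v]
  rw [mulVec_eq_sum_smul hN]
  refine Finset.sum_congr rfl fun j _ => ?_
  by_cases hj : b.repr (WithLp.toLp 2 v) j = 0
  · simp [hj]
  · rw [h j hj, one_mul]

end OrthonormalBasis

section Eigenvectors

variable {ι : Type*} [Fintype ι] [DecidableEq ι] {K : Type*} [Field K] {v : ι → K}

lemma one_sub_smul_mulVec_of_mulVec_eq_smul {A : Matrix ι ι K} {c t : K}
    (h : A *ᵥ v = c • v) : (1 - t • A) *ᵥ v = (1 - t * c) • v := by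
  rw [sub_mulVec, one_mulVec, smul_mulVec, h, smul_smul, sub_smul, one_smul]

lemma inv_one_sub_smul_mulVec_of_mulVec_eq_smul {A : Matrix ι ι K} {c t : K}
    (hA : IsUnit (1 - t • A)) (hc : 1 - t * c ≠ 0) (h : A *ᵥ v = c • v) :
    (1 - t • A)⁻¹ *ᵥ v = (1 - t * c)⁻¹ • v := by
  have : Invertible (1 - t • A) := hA.invertible
  refine inv_mulVec_eq_vec ?_
  rw [mulVec_smul, one_sub_smul_mulVec_of_mulVec_eq_smul h, smul_smul, inv_mul_cancel₀ hc,
    one_smul]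

lemma psi_mulVec_of_mulVec_eq_smul {A : Matrix ι ι K} {c α : K} (hA : IsUnit (1 - α • A))
    (hc : 1 - α * c ≠ 0) (h : A *ᵥ v = c • v) :
    ((1 - α) • (1 - α • A)⁻¹) *ᵥ v = ((1 - α) / (1 - α * c)) • v := by
  rw [smul_mulVec, inv_one_sub_smul_mulVec_of_mulVec_eq_smul hA hc h, smul_smul, div_eq_mul_inv]

end Eigenvectors

section StochasticMatrix

variable {ι : Type*} [Fintype ι] [DecidableEq ι]

lemma linfty_opNorm_le_one_of_mem_rowStochastic {S : Matrix ι ι ℝ}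
    (hS : S ∈ rowStochastic ℝ ι) : ‖S‖ ≤ 1 := by
  rw [← NNReal.coe_one, ← coe_nnnorm, NNReal.coe_le_coe, linfty_opNNNorm_def]
  refine Finset.sup_le fun i _ => ?_
  rw [← NNReal.coe_le_coe]
  push_cast
  simp [abs_of_nonneg (hS.1 _ _), sum_row_of_mem_rowStochastic hS]

lemma norm_le_linfty_opNorm_of_mulVec_eq_smul {𝕜 : Type*} [NormedField 𝕜] {A : Matrix ι ι 𝕜}
    {v : ι → 𝕜} {c : 𝕜} (hv : v ≠ 0) (h : A *ᵥ v = c • v) : ‖c‖ ≤ ‖A‖ := by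
  have := linfty_opNorm_mulVec A v
  rw [h, norm_smul] at this
  exact le_of_mul_le_mul_right this (norm_pos_iff.mpr hv)

lemma Matrix.IsHermitian.eigenvalues_le_one_of_mem_rowStochastic {W : Matrix ι ι ℝ}
    (hW : W.IsHermitian) (hWs : W ∈ rowStochastic ℝ ι) (j : ι) : hW.eigenvalues j ≤ 1 := by
  have hb : ⇑(hW.eigenvectorBasis j) ≠ 0 := fun h =>
    hW.eigenvectorBasis.orthonormal.ne_zero j (WithLp.ofLp_injective 2 h)
  have := norm_le_linfty_opNorm_of_mulVec_eq_smul hb (hW.mulVec_eigenvectorBasis j)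
  rw [Real.norm_eq_abs] at this
  exact (le_abs_self _).trans (this.trans (linfty_opNorm_le_one_of_mem_rowStochastic hWs))

lemma Matrix.IsHermitian.sum_eigenvectorBasis_eq_zero_of_mem_rowStochastic {W : Matrix ι ι ℝ}
    (hW : W.IsHermitian) (hWs : W ∈ rowStochastic ℝ ι) {j : ι} (hj : hW.eigenvalues j ≠ 1) :
    ∑ i, hW.eigenvectorBasis j i = 0 := by
  have hWc : W ∈ colStochastic ℝ ι := by
    rwa [← transpose_mem_rowStochastic_iff_mem_colStochastic,
      ← conjTranspose_eq_transpose_of_trivial, hW.eq]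
  have := sum_mulVec_of_mem_colStochastic (x := ⇑(hW.eigenvectorBasis j)) hWc
  rw [hW.mulVec_eigenvectorBasis j] at this
  simp only [Pi.smul_apply, smul_eq_mul, ← Finset.mul_sum] at this
  exact eq_zero_of_mul_eq_self_left hj this

end StochasticMatrix

lemma psiInf_const {n : ℕ} {α : ℝ} (hα0 : 0 ≤ α) (hα1 : α < 1) {W : Matrix (Fin n) (Fin n) ℝ}
    (hW : ‖W‖ ≤ 1) : PsiInf (fun _ => α) W = (1 - α) • (1 - α • W)⁻¹ := by
  have hnorm : ‖α • W‖ < 1 := by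
    rw [norm_smul, Real.norm_of_nonneg hα0]
    nlinarith [norm_nonneg W]
  have hterm : ∀ k : ℕ, (diagonal (fun _ : Fin n => α) * W) ^ k * (1 - diagonal fun _ => α)
      = (1 - α) • (α • W) ^ k := by
    intro k
    rw [← smul_one_eq_diagonal, smul_mul, Matrix.one_mul, Matrix.mul_sub, Matrix.mul_one,
      Matrix.mul_smul, Matrix.mul_one, sub_smul, one_smul]
  rw [PsiInf, tsum_congr hterm]
  refine ((summable_geometric_of_norm_lt_one hnorm).tsum_const_smul (1 - α)).trans ?_
  rw [geom_series_eq_inverse _ hnorm, nonsing_inv_eq_ringInverse]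

namespace SimpleGraph

variable {V : Type*} [Fintype V] [DecidableEq V] {G : SimpleGraph V}

lemma Connected.apply_eq_of_mulVec_eq_self (hG : G.Connected) {S : Matrix V V ℝ}
    (hS : S ∈ rowStochastic ℝ V) (hpos : ∀ i j, G.Adj i j → 0 < S i j) {v : V → ℝ}
    (hv : S *ᵥ v = v) (i j : V) : v i = v j := by
  obtain ⟨i₀, -, hmax⟩ := Finset.exists_max_image Finset.univ v ⟨i, Finset.mem_univ i⟩
  have hmax : ∀ k, v k ≤ v i₀ := fun k => hmax k (Finset.mem_univ k)
  -- A vertex where `v` is maximal is a weighted average of its neighbours, so they are maximal too.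
  have hstep : ∀ a b, G.Adj a b → v a = v i₀ → v b = v i₀ := by
    intro a b hab ha
    have hdefect : ∑ k, S a k * (v i₀ - v k) = 0 := by
      have hva : ∑ k, S a k * v k = v a := congrFun hv a
      simp only [mul_sub, Finset.sum_sub_distrib, ← Finset.sum_mul,
        sum_row_of_mem_rowStochastic hS, hva, ha, one_mul, sub_self]
    have hb := (Finset.sum_eq_zero_iff_of_nonneg fun k _ =>
      mul_nonneg (hS.1 a k) (sub_nonneg.mpr (hmax k))).mp hdefect b (Finset.mem_univ b)
    have := (mul_eq_zero.mp hb).resolve_left (hpos a b hab).ne'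
    linarith
  have hwalk : ∀ {a b : V}, G.Walk a b → v a = v i₀ → v b = v i₀ := by
    intro a b p
    induction p with
    | nil => exact id
    | cons h _ ih => exact fun ha => ih (hstep _ _ h ha)
  rw [hwalk (hG.preconnected i₀ i).some rfl, hwalk (hG.preconnected i₀ j).some rfl]

end SimpleGraph

section RowNormAdj

variable {n : ℕ} (G : SimpleGraph (Fin n)) [DecidableRel G.Adj]

lemma rowNormAdj_mem_rowStochastic (hdeg : ∀ i, 0 < G.degree i) :
    rowNormAdj G ∈ rowStochastic ℝ (Fin n) := by
  refine mem_rowStochastic_iff_sum.mpr ⟨fun i j => ?_, fun i => ?_⟩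
  · simp only [rowNormAdj, of_apply, SimpleGraph.adjMatrix_apply]
    split_ifs <;> positivity
  · have hsum := G.adjMatrix_mulVec_const_apply (α := ℝ) (a := 1) (v := i)
    simp only [mulVec, dotProduct, Function.const_apply, mul_one] at hsum
    simp only [rowNormAdj, of_apply, ← Finset.sum_div, hsum]
    exact div_self (by exact_mod_cast (hdeg i).ne')

lemma rowNormAdj_isHermitian {d : ℕ} (hreg : ∀ i, G.degree i = d) :
    (rowNormAdj G).IsHermitian := by
  ext i j
  simp [rowNormAdj, hreg, G.adj_comm]

lemma rowNormAdj_pos_of_adj {i j : Fin n} (h : G.Adj i j) : 0 < rowNormAdj G i j := by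
  have := G.degree_pos_iff_exists_adj i |>.mpr ⟨j, h⟩
  simp only [rowNormAdj, of_apply, SimpleGraph.adjMatrix_apply, h, if_true]
  positivity

end RowNormAdj

lemma one_sub_mul_pos {t μ : ℝ} (ht : t ∈ Set.Ico 0 1) (hμ : μ ≤ 1) : 0 < 1 - t * μ :=
  sub_pos.mpr (mul_lt_one_of_nonneg_of_lt_one_left ht.1 ht.2 hμ)

noncomputable def stableGain (β μ : ℝ) : ℝ := (1 - β) * μ / (1 - β * μ)

lemma stableGain_one {β : ℝ} (hβ : β ≠ 1) : stableGain β 1 = 1 := by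
  simp [stableGain, sub_ne_zero.mpr hβ.symm]

lemma stablePoint_mulVec_of_mulVec_eq_smul {ι : Type*} [Fintype ι] [DecidableEq ι]
    {P : Matrix ι ι ℝ} {v : ι → ℝ} {β μ : ℝ} (hP : IsUnit (1 - β • P)) (hμ : 1 - β * μ ≠ 0)
    (h : P *ᵥ v = μ • v) : ((1 - β) • ((1 - β • P)⁻¹ * P)) *ᵥ v = stableGain β μ • v := by
  rw [smul_mulVec, ← mulVec_mulVec, h, mulVec_smul,
    inv_one_sub_smul_mulVec_of_mulVec_eq_smul hP hμ h, smul_smul, smul_smul, stableGain,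
    div_eq_mul_inv, mul_assoc]

lemma hasDerivAt_stableGain {β μ : ℝ} (h : 1 - β * μ ≠ 0) :
    HasDerivAt (stableGain · μ) (μ * (μ - 1) / (1 - β * μ) ^ 2) β := by
  have hnum : HasDerivAt (fun t => (1 - t) * μ) (-μ) β := by
    simpa using ((hasDerivAt_id β).const_sub 1).mul_const μ
  have hden : HasDerivAt (fun t => 1 - t * μ) (-μ) β := by
    simpa using ((hasDerivAt_id β).mul_const μ).const_sub 1
  exact (hnum.div hden h).congr_deriv (by ring)

lemma exists_neg_hasDerivAt_sum_sq_stableGain {ι : Type*} [Fintype ι] {μ c : ι → ℝ}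
    (hμ : ∀ j, μ j ∈ Set.Ioc 0 1) (hc : ∃ j, c j ≠ 0 ∧ μ j < 1) {β : ℝ}
    (hβ : β ∈ Set.Ioo 0 1) :
    ∃ D < 0, HasDerivAt (fun t => ∑ j, (stableGain t (μ j) * c j) ^ 2) D β := by
  have hden : ∀ j, 0 < 1 - β * μ j := fun j =>
    one_sub_mul_pos (Set.Ioo_subset_Ico_self hβ) (hμ j).2
  refine ⟨∑ j, 2 * c j ^ 2 * stableGain β (μ j) * (μ j * (μ j - 1) / (1 - β * μ j) ^ 2),
    ?_, HasDerivAt.fun_sum fun j _ => ?_⟩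
  · obtain ⟨j₀, hcj₀, hμj₀⟩ := hc
    have hgain : ∀ j, 0 < stableGain β (μ j) := fun j =>
      div_pos (mul_pos (sub_pos.mpr hβ.2) (hμ j).1) (hden j)
    have hslope : ∀ j, μ j * (μ j - 1) / (1 - β * μ j) ^ 2 ≤ 0 := fun j =>
      div_nonpos_of_nonpos_of_nonneg
        (mul_nonpos_of_nonneg_of_nonpos (hμ j).1.le (sub_nonpos.mpr (hμ j).2)) (sq_nonneg _)
    have hslope₀ : μ j₀ * (μ j₀ - 1) / (1 - β * μ j₀) ^ 2 < 0 :=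
      div_neg_of_neg_of_pos (mul_neg_of_pos_of_neg (hμ j₀).1 (sub_neg.mpr hμj₀))
        (pow_pos (hden j₀) 2)
    calc _ < ∑ _j : ι, (0 : ℝ) := by
          refine Finset.sum_lt_sum (fun j _ => ?_) ⟨j₀, Finset.mem_univ _, ?_⟩
          · have := hgain j
            exact mul_nonpos_of_nonneg_of_nonpos (by positivity) (hslope j)
          · exact mul_neg_of_pos_of_neg
              (mul_pos (mul_pos two_pos (pow_two_pos_of_ne_zero hcj₀)) (hgain j₀)) hslope₀
      _ = 0 := Finset.sum_const_zero
  · exact (((hasDerivAt_stableGain (hden j).ne').mul_const (c j)).pow 2).congr_deriv (by ring)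

section Variance

variable {n : ℕ}

lemma varV_eq_sum_sq_sub (x : Fin n → ℝ) : varV x = ∑ i, x i ^ 2 - (∑ i, x i) ^ 2 / n := by
  rcases Nat.eq_zero_or_pos n with rfl | hn
  · simp [varV]
  · have hn' : (n : ℝ) ≠ 0 := by positivity
    simp only [varV, meanV, sub_sq, Finset.sum_add_distrib, Finset.sum_sub_distrib,
      ← Finset.sum_mul, Finset.sum_const, Finset.card_univ, Fintype.card_fin, nsmul_eq_mul]
    field_simp
    rw [← Finset.mul_sum]
    ring

lemma varV_eq_zero_of_forall_eq {x : Fin n → ℝ} (hx : ∀ i j, x i = x j) : varV x = 0 := by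
  refine Finset.sum_eq_zero fun i _ => ?_
  have hn : (n : ℝ) ≠ 0 := by exact_mod_cast (Fin.pos i).ne'
  have hmean : meanV x = x i := by
    simp only [meanV, hx _ i, Finset.sum_const, Finset.card_univ, Fintype.card_fin, nsmul_eq_mul]
    field_simp
  rw [hmean, sub_self, zero_pow two_ne_zero]

end Variance

section StablePoint

variable {n : ℕ} {b : OrthonormalBasis (Fin n) ℝ (EuclideanSpace ℝ (Fin n))}
  {P : Matrix (Fin n) (Fin n) ℝ} {μ : Fin n → ℝ}

lemma isUnit_one_sub_smul_of_eigenbasis (hP : ∀ j, P *ᵥ ⇑(b j) = μ j • ⇑(b j))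
    (hμ : ∀ j, μ j ∈ Set.Ioc 0 1) {β : ℝ} (hβ : β ∈ Set.Ioo 0 1) : IsUnit (1 - β • P) :=
  b.isUnit_of_mulVec_eq_smul (fun j => one_sub_smul_mulVec_of_mulVec_eq_smul (hP j)) fun j =>
    (one_sub_mul_pos (Set.Ioo_subset_Ico_self hβ) (hμ j).2).ne'

lemma varV_stablePoint_eq (hP : ∀ j, P *ᵥ ⇑(b j) = μ j • ⇑(b j)) (hμ : ∀ j, μ j ∈ Set.Ioc 0 1)
    (hsum : ∀ j, μ j = 1 ∨ ∑ i, b j i = 0) {β : ℝ} (hβ : β ∈ Set.Ioo 0 1) (x : Fin n → ℝ) :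
    varV ((1 - β) • (((1 - β • P)⁻¹ * P) *ᵥ x))
      = ∑ j, (stableGain β (μ j) * b.repr (WithLp.toLp 2 x) j) ^ 2 - (∑ i, x i) ^ 2 / n := by
  have hN : ∀ j, ((1 - β) • ((1 - β • P)⁻¹ * P)) *ᵥ ⇑(b j) = stableGain β (μ j) • ⇑(b j) :=
    fun j => stablePoint_mulVec_of_mulVec_eq_smul (isUnit_one_sub_smul_of_eigenbasis hP hμ hβ)
      (one_sub_mul_pos (Set.Ioo_subset_Ico_self hβ) (hμ j).2).ne' (hP j)
  have hgain : ∀ j, stableGain β (μ j) = 1 ∨ ∑ i, b j i = 0 := fun j =>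
    (hsum j).imp_left fun h => by rw [h, stableGain_one hβ.2.ne]
  rw [← smul_mulVec, varV_eq_sum_sq_sub, b.sum_sq_mulVec_eq hN, b.sum_mulVec_eq_sum hN hgain]

lemma exists_neg_hasDerivAt_varV_stablePoint (hP : ∀ j, P *ᵥ ⇑(b j) = μ j • ⇑(b j))
    (hμ : ∀ j, μ j ∈ Set.Ioc 0 1) (hsum : ∀ j, μ j = 1 ∨ ∑ i, b j i = 0) {x : Fin n → ℝ}
    (hx : ∃ j, b.repr (WithLp.toLp 2 x) j ≠ 0 ∧ μ j < 1) {β : ℝ} (hβ : β ∈ Set.Ioo 0 1) :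
    ∃ D < 0, HasDerivAt (fun t => varV ((1 - t) • (((1 - t • P)⁻¹ * P) *ᵥ x))) D β := by
  obtain ⟨D, hD, hderiv⟩ := exists_neg_hasDerivAt_sum_sq_stableGain hμ hx hβ
  refine ⟨D, hD, (hderiv.sub_const ((∑ i, x i) ^ 2 / n)).congr_of_eventuallyEq ?_⟩
  filter_upwards [Ioo_mem_nhds hβ.1 hβ.2] with t ht
  exact varV_stablePoint_eq hP hμ hsum ht x

end StablePoint

lemma exists_eigenbasis_psi_of_isHermitian {n : ℕ} {W P : Matrix (Fin n) (Fin n) ℝ}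
    (hW : W.IsHermitian) (hWs : W ∈ rowStochastic ℝ (Fin n)) {α : ℝ} (hα : α ∈ Set.Ioo 0 1)
    (hP : P = (1 - α) • (1 - α • W)⁻¹) {x : Fin n → ℝ} (hx : W *ᵥ x ≠ x) :
    ∃ (b : OrthonormalBasis (Fin n) ℝ (EuclideanSpace ℝ (Fin n))) (μ : Fin n → ℝ),
      (∀ j, P *ᵥ ⇑(b j) = μ j • ⇑(b j)) ∧ (∀ j, μ j ∈ Set.Ioc 0 1) ∧
      (∀ j, μ j = 1 ∨ ∑ i, b j i = 0) ∧ ∃ j, b.repr (WithLp.toLp 2 x) j ≠ 0 ∧ μ j < 1 := by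
  obtain ⟨hα0, hα1⟩ := hα
  set b := hW.eigenvectorBasis
  set ev := hW.eigenvalues
  have hev : ∀ j, ev j ≤ 1 := hW.eigenvalues_le_one_of_mem_rowStochastic hWs
  have hden : ∀ j, 0 < 1 - α * ev j := fun j => one_sub_mul_pos ⟨hα0.le, hα1⟩ (hev j)
  have hunit : IsUnit (1 - α • W) := b.isUnit_of_mulVec_eq_smul
    (fun j => one_sub_smul_mulVec_of_mulVec_eq_smul (hW.mulVec_eigenvectorBasis j))
    fun j => (hden j).ne'
  obtain ⟨j₀, hc, hevj₀⟩ := b.exists_repr_ne_zero_of_mulVec_ne_self hW.mulVec_eigenvectorBasis hx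
  refine ⟨b, fun j => (1 - α) / (1 - α * ev j), fun j => hP ▸
    psi_mulVec_of_mulVec_eq_smul hunit (hden j).ne' (hW.mulVec_eigenvectorBasis j), fun j =>
    ⟨div_pos (by linarith) (hden j), (div_le_one (hden j)).mpr (by nlinarith [hev j])⟩,
    fun j => ?_, j₀, hc, (div_lt_one (hden j₀)).mpr ?_⟩
  · by_cases hj : ev j = 1
    · left
      simp only [hj, mul_one]
      exact div_self (by linarith)
    · exact Or.inr (hW.sum_eigenvectorBasis_eq_zero_of_mem_rowStochastic hWs hj)
  · nlinarith [lt_of_le_of_ne (hev j₀) hevj₀]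

theorem variance_decreasing_in_platform_susceptibility_general {n : ℕ}
    (G : SimpleGraph (Fin n)) [DecidableRel G.Adj] (hG : G.Connected)
    (d : ℕ) (hd : 0 < d) (hreg : ∀ i, G.degree i = d)
    (α : ℝ) (hα : α ∈ Set.Ioo (0 : ℝ) 1)
    (xstar : Fin n → ℝ)
    (hvar : 0 < varV xstar) :
    let P := PsiInf (fun _ => α) (rowNormAdj G)
    let xPS : ℝ → Fin n → ℝ := fun β => (1 - β) • (((1 - β • P)⁻¹ * P) *ᵥ xstar)
    (∀ β ∈ Set.Ioo (0 : ℝ) 1, IsUnit (1 - β • P)) ∧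
    (∀ β ∈ Set.Ioo (0 : ℝ) 1, DifferentiableAt ℝ (fun b => varV (xPS b)) β) ∧
    (∀ β ∈ Set.Ioo (0 : ℝ) 1, deriv (fun b => varV (xPS b)) β < 0) := by
  intro P xPS
  have hWs := rowNormAdj_mem_rowStochastic G fun i => hreg i ▸ hd
  have hP : P = (1 - α) • (1 - α • rowNormAdj G)⁻¹ :=
    psiInf_const hα.1.le hα.2 (linfty_opNorm_le_one_of_mem_rowStochastic hWs)
  have hx : rowNormAdj G *ᵥ xstar ≠ xstar := fun h => hvar.ne' (varV_eq_zero_of_forall_eq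
    (hG.apply_eq_of_mulVec_eq_self hWs (fun _ _ => rowNormAdj_pos_of_adj G) h))
  obtain ⟨b, μ, hPb, hμ, hsum, hxμ⟩ :=
    exists_eigenbasis_psi_of_isHermitian (rowNormAdj_isHermitian G hreg) hWs hα hP hx
  refine ⟨fun β hβ => isUnit_one_sub_smul_of_eigenbasis hPb hμ hβ, fun β hβ => ?_, fun β hβ => ?_⟩
  · obtain ⟨D, -, hD⟩ := exists_neg_hasDerivAt_varV_stablePoint hPb hμ hsum hxμ hβ
    exact hD.differentiableAt
  · obtain ⟨D, hDneg, hD⟩ := exists_neg_hasDerivAt_varV_stablePoint hPb hμ hsum hxμ hβ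
    rw [hD.deriv]
    exact hDneg

/-- homogenizing force of performativity.  On a `d`-regular graph
with homogeneous `α ∈ (0,1)` and nonconstant `x*`, the variance of the stable
point `x_PS(β) = (1 − β)(I − βΨ_∞)⁻¹ Ψ_∞ x*` is differentiable in `β` on
`(0,1)` with strictly negative derivative. -/
theorem variance_decreasing_in_platform_susceptibility {n : ℕ} (hn : 2 ≤ n)
    (G : SimpleGraph (Fin n)) [DecidableRel G.Adj] (hG : G.Connected)
    (d : ℕ) (hd : 0 < d) (hreg : ∀ i, G.degree i = d)
    (α : ℝ) (hα : α ∈ Set.Ioo (0 : ℝ) 1)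
    (xstar : Fin n → ℝ) (hx : ∀ i, xstar i ∈ Set.Icc (0 : ℝ) 1)
    (hvar : 0 < varV xstar) :
    let P := PsiInf (fun _ => α) (rowNormAdj G)
    let xPS : ℝ → Fin n → ℝ := fun β => (1 - β) • (((1 - β • P)⁻¹ * P) *ᵥ xstar)
    (∀ β ∈ Set.Ioo (0 : ℝ) 1, IsUnit (1 - β • P)) ∧
    (∀ β ∈ Set.Ioo (0 : ℝ) 1, DifferentiableAt ℝ (fun b => varV (xPS b)) β) ∧
    (∀ β ∈ Set.Ioo (0 : ℝ) 1, deriv (fun b => varV (xPS b)) β < 0) :=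
  variance_decreasing_in_platform_susceptibility_general G hG d hd hreg α hα xstar hvar
end

section
/- (Consensus through performativity.) Suppose α_i ∈ (0,1) for all i and fix an integer K ≥ 1. For β ∈ [0,1) let x_PS(β) = (1 − β)(I − βΨ_K)^{−1} Ψ_K x* be the stable point under homogeneous platform susceptibility β. Then there exists c* ∈ [0,1] such that x_PS(β) converges to the constant vector c*·1 as β → 1⁻; moreover c* = yᵀx*, where y is the unique entrywise-nonnegative vector with Ψ_Kᵀ y = y and Σ_i y_i = 1. -/
open Matrix Filter Topology

namespace ConsensusAux
set_option linter.unusedSectionVars false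

open Finset

variable {n : ℕ}

lemma mul_nonneg_entries {P Q : Matrix (Fin n) (Fin n) ℝ}
    (hP : ∀ i j, 0 ≤ P i j) (hQ : ∀ i j, 0 ≤ Q i j) : ∀ i j, 0 ≤ (P * Q) i j := by
  intro i j
  rw [Matrix.mul_apply]
  exact Finset.sum_nonneg fun l _ => mul_nonneg (hP i l) (hQ l j)

lemma pow_nonneg_entries {P : Matrix (Fin n) (Fin n) ℝ}
    (hP : ∀ i j, 0 ≤ P i j) : ∀ k i j, 0 ≤ (P ^ k) i j := by
  intro k
  induction k with
  | zero =>
      intro i j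
      by_cases h : i = j <;> simp [Matrix.one_apply, h]
  | succ k ih =>
      rw [pow_succ]
      exact mul_nonneg_entries ih hP

lemma mul_rowsum {P Q : Matrix (Fin n) (Fin n) ℝ}
    (hP : ∀ i, ∑ j, P i j = 1) (hQ : ∀ i, ∑ j, Q i j = 1) :
    ∀ i, ∑ j, (P * Q) i j = 1 := by
  intro i
  simp only [Matrix.mul_apply]
  rw [Finset.sum_comm]
  simp_rw [← Finset.mul_sum, hQ, mul_one]
  exact hP i

lemma pow_rowsum {P : Matrix (Fin n) (Fin n) ℝ}
    (hP : ∀ i, ∑ j, P i j = 1) : ∀ k i, ∑ j, (P ^ k) i j = 1 := by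
  intro k
  induction k with
  | zero => intro i; simp [Matrix.one_apply]
  | succ k ih =>
      rw [pow_succ]
      exact mul_rowsum ih hP

lemma mulVec_apply (P : Matrix (Fin n) (Fin n) ℝ) (v : Fin n → ℝ) (i : Fin n) :
    (P *ᵥ v) i = ∑ j, P i j * v j := rfl

variable [Nonempty (Fin n)]

lemma mulVec_le_sup' {P : Matrix (Fin n) (Fin n) ℝ}
    (h0 : ∀ i j, 0 ≤ P i j) (h1 : ∀ i, ∑ j, P i j = 1) (v : Fin n → ℝ) (i : Fin n) :
    (P *ᵥ v) i ≤ univ.sup' univ_nonempty v := by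
  rw [mulVec_apply]
  calc ∑ j, P i j * v j ≤ ∑ j, P i j * univ.sup' univ_nonempty v :=
        Finset.sum_le_sum fun j _ =>
          mul_le_mul_of_nonneg_left (Finset.le_sup' v (mem_univ j)) (h0 i j)
    _ = univ.sup' univ_nonempty v := by rw [← Finset.sum_mul, h1, one_mul]

lemma inf'_le_mulVec {P : Matrix (Fin n) (Fin n) ℝ}
    (h0 : ∀ i j, 0 ≤ P i j) (h1 : ∀ i, ∑ j, P i j = 1) (v : Fin n → ℝ) (i : Fin n) :
    univ.inf' univ_nonempty v ≤ (P *ᵥ v) i := by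
  rw [mulVec_apply]
  calc univ.inf' univ_nonempty v
      = ∑ j, P i j * univ.inf' univ_nonempty v := by rw [← Finset.sum_mul, h1, one_mul]
    _ ≤ ∑ j, P i j * v j :=
        Finset.sum_le_sum fun j _ =>
          mul_le_mul_of_nonneg_left (Finset.inf'_le v (mem_univ j)) (h0 i j)

lemma contraction {M : Matrix (Fin n) (Fin n) ℝ} {ε : ℝ}
    (h1 : ∀ i, ∑ j, M i j = 1) (hm : ∀ i j, ε ≤ M i j) (v : Fin n → ℝ) :
    univ.sup' univ_nonempty (M *ᵥ v) - univ.inf' univ_nonempty (M *ᵥ v)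
      ≤ (1 - n * ε) * (univ.sup' univ_nonempty v - univ.inf' univ_nonempty v) := by
  set S := univ.sup' univ_nonempty v with hS
  set I := univ.inf' univ_nonempty v with hI
  have hrow : ∀ i, ∑ j, (M i j - ε) = 1 - n * ε := by
    intro i
    rw [Finset.sum_sub_distrib, h1, Finset.sum_const, Finset.card_univ]
    simp [nsmul_eq_mul]
  have hup : ∀ i, (M *ᵥ v) i ≤ (1 - n * ε) * S + ε * ∑ j, v j := by
    intro i
    rw [mulVec_apply]
    have : ∀ j, M i j * v j = (M i j - ε) * v j + ε * v j := fun j => by ring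
    simp_rw [this]
    rw [Finset.sum_add_distrib, ← Finset.mul_sum]
    have hle : ∑ j, (M i j - ε) * v j ≤ ∑ j, (M i j - ε) * S :=
      Finset.sum_le_sum fun j _ =>
        mul_le_mul_of_nonneg_left (Finset.le_sup' v (mem_univ j)) (sub_nonneg.2 (hm i j))
    have : ∑ j, (M i j - ε) * S = (1 - n * ε) * S := by
      rw [← Finset.sum_mul, hrow]
    linarith [hle, this]
  have hlow : ∀ i, (1 - n * ε) * I + ε * ∑ j, v j ≤ (M *ᵥ v) i := by
    intro i
    rw [mulVec_apply]
    have : ∀ j, M i j * v j = (M i j - ε) * v j + ε * v j := fun j => by ring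
    simp_rw [this]
    rw [Finset.sum_add_distrib, ← Finset.mul_sum]
    have hle : ∑ j, (M i j - ε) * I ≤ ∑ j, (M i j - ε) * v j :=
      Finset.sum_le_sum fun j _ =>
        mul_le_mul_of_nonneg_left (Finset.inf'_le v (mem_univ j)) (sub_nonneg.2 (hm i j))
    have : ∑ j, (M i j - ε) * I = (1 - n * ε) * I := by
      rw [← Finset.sum_mul, hrow]
    linarith [hle, this]
  have h1' : univ.sup' univ_nonempty (M *ᵥ v) ≤ (1 - n * ε) * S + ε * ∑ j, v j :=
    Finset.sup'_le _ _ fun i _ => hup i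
  have h2' : (1 - n * ε) * I + ε * ∑ j, v j ≤ univ.inf' univ_nonempty (M *ᵥ v) :=
    Finset.le_inf' _ _ fun i _ => hlow i
  linarith [h1', h2']

theorem key_convergence (P : Matrix (Fin n) (Fin n) ℝ)
    (h0 : ∀ i j, 0 ≤ P i j) (h1 : ∀ i, ∑ j, P i j = 1)
    (m : ℕ) (hm0 : 0 < m) (ε : ℝ) (hε : 0 < ε) (hm : ∀ i j, ε ≤ (P ^ m) i j)
    (v : Fin n → ℝ) :
    ∃ c, Tendsto (fun k => (P ^ k) *ᵥ v) atTop (𝓝 fun _ => c) := by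
  set a : ℕ → ℝ := fun k => univ.inf' univ_nonempty ((P ^ k) *ᵥ v) with ha_def
  set b : ℕ → ℝ := fun k => univ.sup' univ_nonempty ((P ^ k) *ᵥ v) with hb_def
  have hstep : ∀ k, (P ^ (k + 1)) *ᵥ v = P *ᵥ ((P ^ k) *ᵥ v) := by
    intro k
    rw [Matrix.mulVec_mulVec, ← pow_succ']
  have ha : Monotone a := by
    apply monotone_nat_of_le_succ
    intro k
    have := fun i => inf'_le_mulVec h0 h1 ((P ^ k) *ᵥ v) i
    rw [ha_def]
    simp only
    rw [hstep k]
    exact Finset.le_inf' _ _ fun i _ => this i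
  have hb : ∀ k, b (k + 1) ≤ b k := by
    intro k
    have := fun i => mulVec_le_sup' h0 h1 ((P ^ k) *ᵥ v) i
    rw [hb_def]
    simp only
    rw [hstep k]
    exact Finset.sup'_le _ _ fun i _ => this i
  have hab : ∀ k, a k ≤ b k := fun k =>
    le_trans (Finset.inf'_le _ (mem_univ (Classical.arbitrary (Fin n))))
      (Finset.le_sup' _ (mem_univ (Classical.arbitrary (Fin n))))
  set r : ℝ := 1 - n * ε with hr_def
  have hnpos : (0 : ℝ) < n := by
    have : 0 < n := Fin.pos_iff_nonempty.2 ‹Nonempty (Fin n)›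
    exact_mod_cast this
  have hr0 : 0 ≤ r := by
    have hi := pow_rowsum h1 m (Classical.arbitrary (Fin n))
    have : (n : ℝ) * ε ≤ 1 := by
      calc (n : ℝ) * ε = ∑ _j : Fin n, ε := by
            rw [Finset.sum_const, Finset.card_univ]; simp [nsmul_eq_mul]
        _ ≤ ∑ j, (P ^ m) (Classical.arbitrary (Fin n)) j :=
            Finset.sum_le_sum fun j _ => hm _ j
        _ = 1 := hi
    linarith
  have hr1 : r < 1 := by
    have : 0 < (n : ℝ) * ε := mul_pos hnpos hε
    rw [hr_def]; linarith
  have hosc : ∀ q, b (m * q) - a (m * q) ≤ r ^ q * (b 0 - a 0) := by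
    intro q
    induction q with
    | zero => simp
    | succ q ih =>
        have heq : m * (q + 1) = m + m * q := by ring
        have hv : (P ^ (m * (q + 1))) *ᵥ v = (P ^ m) *ᵥ ((P ^ (m * q)) *ᵥ v) := by
          rw [heq, pow_add, Matrix.mulVec_mulVec]
        have hc := contraction (pow_rowsum h1 m) hm ((P ^ (m * q)) *ᵥ v)
        rw [ha_def, hb_def]
        simp only
        rw [hv]
        calc univ.sup' univ_nonempty ((P ^ m) *ᵥ ((P ^ (m * q)) *ᵥ v))
              - univ.inf' univ_nonempty ((P ^ m) *ᵥ ((P ^ (m * q)) *ᵥ v))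
            ≤ r * (b (m * q) - a (m * q)) := hc
          _ ≤ r * (r ^ q * (b 0 - a 0)) := mul_le_mul_of_nonneg_left ih hr0
          _ = r ^ (q + 1) * (b 0 - a 0) := by ring
  have hbanti : Antitone b := antitone_nat_of_succ_le hb
  have hanti : ∀ ⦃k l⦄, k ≤ l → b l - a l ≤ b k - a k := by
    intro k l hkl
    have := ha hkl
    have := hbanti hkl
    linarith
  have hosck : ∀ k, b k - a k ≤ r ^ (k / m) * (b 0 - a 0) := by
    intro k
    exact (hanti (Nat.mul_div_le k m)).trans (hosc (k / m))
  have hdiv : Tendsto (fun k : ℕ => k / m) atTop atTop := by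
    apply tendsto_atTop_atTop.2
    intro q
    exact ⟨q * m, fun k hk => (Nat.le_div_iff_mul_le hm0).2 hk⟩
  have hpow : Tendsto (fun k : ℕ => r ^ (k / m) * (b 0 - a 0)) atTop (𝓝 0) := by
    have h := (tendsto_pow_atTop_nhds_zero_of_lt_one hr0 hr1).comp hdiv
    simpa using h.mul_const (b 0 - a 0)
  have htosc : Tendsto (fun k => b k - a k) atTop (𝓝 0) := by
    apply squeeze_zero (fun k => by linarith [hab k]) hosck hpow
  have hbdd : BddAbove (Set.range a) := by
    refine ⟨b 0, ?_⟩
    rintro x ⟨k, rfl⟩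
    exact (hab k).trans (hbanti (Nat.zero_le k))
  set c : ℝ := ⨆ k, a k with hc_def
  have hca : Tendsto a atTop (𝓝 c) := tendsto_atTop_ciSup ha hbdd
  have hcb : Tendsto b atTop (𝓝 c) := by
    have : Tendsto (fun k => (b k - a k) + a k) atTop (𝓝 (0 + c)) := htosc.add hca
    simpa using this
  refine ⟨c, ?_⟩
  rw [tendsto_pi_nhds]
  intro i
  apply tendsto_of_tendsto_of_tendsto_of_le_of_le hca hcb
  · intro k
    exact Finset.inf'_le _ (mem_univ i)
  · intro k
    exact Finset.le_sup' _ (mem_univ i)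

theorem stationary (P : Matrix (Fin n) (Fin n) ℝ)
    (h0 : ∀ i j, 0 ≤ P i j) (h1 : ∀ i, ∑ j, P i j = 1)
    (m : ℕ) (hm0 : 0 < m) (ε : ℝ) (hε : 0 < ε) (hm : ∀ i j, ε ≤ (P ^ m) i j) :
    ∃ y : Fin n → ℝ, (∀ j, 0 ≤ y j) ∧ (∀ j, ∑ i, P i j * y i = y j) ∧ (∑ j, y j = 1) ∧
      ∀ v, Tendsto (fun k => (P ^ k) *ᵥ v) atTop (𝓝 fun _ => ∑ j, y j * v j) := by
  choose cf hcf using key_convergence P h0 h1 m hm0 ε hε hm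
  set y : Fin n → ℝ := fun j => cf (Pi.single j 1) with hy_def
  have hentry : ∀ k (i j : Fin n), ((P ^ k) *ᵥ Pi.single j 1) i = (P ^ k) i j := by
    intro k i j
    simp [Matrix.mulVec_single]
  have hcoord : ∀ (j i : Fin n), Tendsto (fun k => (P ^ k) i j) atTop (𝓝 (y j)) := by
    intro j i
    have := tendsto_pi_nhds.1 (hcf (Pi.single j 1)) i
    simpa [hentry] using this
  have hmaster : ∀ v, Tendsto (fun k => (P ^ k) *ᵥ v) atTop (𝓝 fun _ => ∑ j, y j * v j) := by
    intro v
    rw [tendsto_pi_nhds]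
    intro i
    have hrepr : ∀ k, ((P ^ k) *ᵥ v) i = ∑ j, v j * (P ^ k) i j := by
      intro k
      rw [mulVec_apply]
      exact Finset.sum_congr rfl fun j _ => mul_comm _ _
    have h2 : Tendsto (fun k => ∑ j, v j * (P ^ k) i j) atTop (𝓝 (∑ j, v j * y j)) :=
      tendsto_finset_sum _ fun j _ => tendsto_const_nhds.mul (hcoord j i)
    have heq : (∑ j, v j * y j) = ∑ j, y j * v j :=
      Finset.sum_congr rfl fun j _ => mul_comm _ _
    rw [← heq]
    exact h2.congr fun k => (hrepr k).symm
  have hynn : ∀ j, 0 ≤ y j := by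
    intro j
    have := hcoord j (Classical.arbitrary (Fin n))
    exact ge_of_tendsto' this fun k => pow_nonneg_entries h0 k _ j
  have hysum : ∑ j, y j = 1 := by
    have h1' : (fun k => (P ^ k) *ᵥ (fun _ => (1 : ℝ))) = fun _ => (fun _ => (1 : ℝ)) := by
      funext k i
      rw [mulVec_apply]
      simp_rw [mul_one]
      exact pow_rowsum h1 k i
    have h2 := hmaster (fun _ => (1 : ℝ))
    rw [h1'] at h2
    have h3 : (fun _ : Fin n => (1 : ℝ)) = fun _ => ∑ j, y j * 1 :=
      tendsto_nhds_unique tendsto_const_nhds h2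
    have := congr_fun h3 (Classical.arbitrary (Fin n))
    simpa [mul_one] using this.symm
  have hstat : ∀ j, ∑ i, P i j * y i = y j := by
    intro j
    have hseq : (fun k => (P ^ k) *ᵥ (P *ᵥ Pi.single j 1))
        = fun k => (P ^ (k + 1)) *ᵥ Pi.single j 1 := by
      funext k
      rw [Matrix.mulVec_mulVec, ← pow_succ]
    have hA : Tendsto (fun k => (P ^ k) *ᵥ (P *ᵥ Pi.single j 1)) atTop
        (𝓝 fun _ => ∑ i, y i * (P *ᵥ Pi.single j 1) i) := hmaster _
    have hB : Tendsto (fun k => (P ^ (k + 1)) *ᵥ Pi.single j 1) atTop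
        (𝓝 fun _ => y j) := by
      have := (hcf (Pi.single j 1)).comp (tendsto_add_atTop_nat 1)
      exact this
    rw [hseq] at hA
    have h3 := tendsto_nhds_unique hA hB
    have := congr_fun h3 (Classical.arbitrary (Fin n))
    calc ∑ i, P i j * y i = ∑ i, y i * (P *ᵥ Pi.single j 1) i := by
          refine Finset.sum_congr rfl fun i _ => ?_
          simp [Matrix.mulVec_single, mul_comm]
      _ = y j := this
  exact ⟨y, hynn, hstat, hysum, hmaster⟩


lemma rowsum_mul (M N : Matrix (Fin n) (Fin n) ℝ) (i : Fin n) :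
    ∑ j, (M * N) i j = ∑ l, M i l * (∑ j, N l j) := by
  simp_rw [Matrix.mul_apply, Finset.mul_sum]
  exact Finset.sum_comm

lemma pow_diag_pos {P : Matrix (Fin n) (Fin n) ℝ} (h0 : ∀ i j, 0 ≤ P i j)
    (hd : ∀ i, 0 < P i i) : ∀ l i, 0 < (P ^ l) i i := by
  intro l
  induction l with
  | zero => intro i; simp [Matrix.one_apply]
  | succ l ih =>
      intro i
      rw [pow_succ, Matrix.mul_apply]
      exact Finset.sum_pos'
        (fun j _ => mul_nonneg (pow_nonneg_entries h0 l i j) (h0 j i))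
        ⟨i, Finset.mem_univ i, mul_pos (ih i) (hd i)⟩

lemma pow_pos_pad {P : Matrix (Fin n) (Fin n) ℝ} (h0 : ∀ i j, 0 ≤ P i j)
    (hd : ∀ i, 0 < P i i) {k : ℕ} {i j : Fin n} (h : 0 < (P ^ k) i j) (l : ℕ) :
    0 < (P ^ (k + l)) i j := by
  rw [pow_add, Matrix.mul_apply]
  exact Finset.sum_pos'
    (fun x _ => mul_nonneg (pow_nonneg_entries h0 k i x) (pow_nonneg_entries h0 l x j))
    ⟨j, Finset.mem_univ j, mul_pos h (pow_diag_pos h0 hd l j)⟩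

lemma pow_pos_of_walk {G : SimpleGraph (Fin n)} {P : Matrix (Fin n) (Fin n) ℝ}
    (h0 : ∀ i j, 0 ≤ P i j) (hadj : ∀ i j, G.Adj i j → 0 < P i j) :
    ∀ {i j : Fin n} (w : G.Walk i j), 0 < (P ^ w.length) i j := by
  intro i j w
  induction w with
  | nil => simp [Matrix.one_apply]
  | @cons u b c h p ih =>
      rw [SimpleGraph.Walk.length_cons, pow_succ', Matrix.mul_apply]
      exact Finset.sum_pos'
        (fun l _ => mul_nonneg (h0 _ _) (pow_nonneg_entries h0 _ _ _))
        ⟨b, Finset.mem_univ b, mul_pos (hadj _ _ h) ih⟩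

lemma pow_all_pos (hn2 : 2 ≤ n) {G : SimpleGraph (Fin n)} (hG : G.Connected)
    {P : Matrix (Fin n) (Fin n) ℝ}
    (h0 : ∀ i j, 0 ≤ P i j) (hd : ∀ i, 0 < P i i)
    (hadj : ∀ i j, G.Adj i j → 0 < P i j) :
    ∀ i j, 0 < (P ^ (n - 1)) i j := by
  intro i j
  obtain ⟨w⟩ := hG.preconnected i j
  set p := w.toPath with hp
  have hlen : (p : G.Walk i j).length < n := by
    have := SimpleGraph.Walk.IsPath.length_lt p.2
    simpa using this
  have hlen' : (p : G.Walk i j).length ≤ n - 1 := by omega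
  have h1 : 0 < (P ^ (p : G.Walk i j).length) i j := pow_pos_of_walk h0 hadj _
  have := pow_pos_pad h0 hd h1 (n - 1 - (p : G.Walk i j).length)
  rwa [Nat.add_sub_cancel' hlen'] at this


section PsiFacts

variable {G : SimpleGraph (Fin n)} [DecidableRel G.Adj]

lemma degree_pos (hn2 : 2 ≤ n) (hG : G.Connected) (i : Fin n) : 0 < G.degree i := by
  haveI : Nontrivial (Fin n) := Fin.nontrivial_iff_two_le.2 hn2
  obtain ⟨j, hj⟩ := exists_ne i
  obtain ⟨w⟩ := hG.preconnected i j
  rw [SimpleGraph.degree_pos_iff_exists_adj]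
  cases w with
  | nil => exact absurd rfl hj
  | cons h p => exact ⟨_, h⟩

lemma W_nonneg : ∀ i j, 0 ≤ rowNormAdj G i j := by
  intro i j
  unfold rowNormAdj
  rw [Matrix.of_apply]
  apply div_nonneg _ (Nat.cast_nonneg _)
  rw [SimpleGraph.adjMatrix_apply]
  split <;> norm_num

lemma adj_rowsum (i : Fin n) : ∑ j, (G.adjMatrix ℝ) i j = (G.degree i : ℝ) := by
  simp [SimpleGraph.adjMatrix_apply, SimpleGraph.degree, SimpleGraph.neighborFinset_eq_filter,
    Finset.sum_boole]

lemma W_rowsum (hn2 : 2 ≤ n) (hG : G.Connected) (i : Fin n) :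
    ∑ j, rowNormAdj G i j = 1 := by
  have hd : (0 : ℝ) < (G.degree i : ℝ) := by exact_mod_cast degree_pos hn2 hG i
  unfold rowNormAdj
  simp only [Matrix.of_apply]
  rw [← Finset.sum_div, adj_rowsum, div_self hd.ne']

lemma W_adj_pos (hn2 : 2 ≤ n) (hG : G.Connected) {i j : Fin n} (h : G.Adj i j) :
    0 < rowNormAdj G i j := by
  have hd : (0 : ℝ) < (G.degree i : ℝ) := by exact_mod_cast degree_pos hn2 hG i
  unfold rowNormAdj
  rw [Matrix.of_apply, SimpleGraph.adjMatrix_apply, if_pos h]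
  exact div_pos one_pos hd

variable {K : ℕ} {α : Fin n → ℝ}

lemma C_eq : (1 : Matrix (Fin n) (Fin n) ℝ) - Matrix.diagonal α
    = Matrix.diagonal (fun i => 1 - α i) := by
  rw [← Matrix.diagonal_one, Matrix.diagonal_sub]

lemma C_nonneg (hα : ∀ i, α i ∈ Set.Ioo (0 : ℝ) 1) :
    ∀ i j, 0 ≤ ((1 : Matrix (Fin n) (Fin n) ℝ) - Matrix.diagonal α) i j := by
  intro i j
  rw [C_eq, Matrix.diagonal_apply]
  by_cases h : i = j
  · rw [if_pos h]; linarith [(hα i).2]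
  · rw [if_neg h]

lemma B_nonneg (hn2 : 2 ≤ n) (hG : G.Connected) (hα : ∀ i, α i ∈ Set.Ioo (0 : ℝ) 1) :
    ∀ i j, 0 ≤ (Matrix.diagonal α * rowNormAdj G) i j := by
  intro i j
  rw [Matrix.diagonal_mul]
  exact mul_nonneg (hα i).1.le (W_nonneg i j)

lemma B_rowsum (hn2 : 2 ≤ n) (hG : G.Connected) (i : Fin n) :
    ∑ j, (Matrix.diagonal α * rowNormAdj G) i j = α i := by
  simp_rw [Matrix.diagonal_mul]
  rw [← Finset.mul_sum, W_rowsum hn2 hG, mul_one]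

lemma Psi_apply (i j : Fin n) :
    Psi K α (rowNormAdj G) i j
      = (∑ k ∈ Finset.range K,
          ((Matrix.diagonal α * rowNormAdj G) ^ k * (1 - Matrix.diagonal α)) i j)
        + ((Matrix.diagonal α * rowNormAdj G) ^ K) i j := by
  rw [Psi, Matrix.add_apply, Matrix.sum_apply]

lemma Psi_nonneg (hn2 : 2 ≤ n) (hG : G.Connected) (hα : ∀ i, α i ∈ Set.Ioo (0 : ℝ) 1) :
    ∀ i j, 0 ≤ Psi K α (rowNormAdj G) i j := by
  intro i j
  rw [Psi_apply]
  apply add_nonneg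
  · exact Finset.sum_nonneg fun k _ =>
      mul_nonneg_entries (pow_nonneg_entries (B_nonneg hn2 hG hα) k) (C_nonneg hα) i j
  · exact pow_nonneg_entries (B_nonneg hn2 hG hα) K i j

lemma Psi_rowsum (hn2 : 2 ≤ n) (hG : G.Connected) (hα : ∀ i, α i ∈ Set.Ioo (0 : ℝ) 1)
    (i : Fin n) : ∑ j, Psi K α (rowNormAdj G) i j = 1 := by
  set B := Matrix.diagonal α * rowNormAdj G with hB
  have hf : ∀ k, ∑ j, (B ^ k * (1 - Matrix.diagonal α)) i j
      = (∑ j, (B ^ k) i j) - ∑ j, (B ^ (k + 1)) i j := by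
    intro k
    rw [rowsum_mul]
    have h2 : ∑ j, (B ^ (k + 1)) i j = ∑ l, (B ^ k) i l * α l := by
      rw [pow_succ, rowsum_mul]
      exact Finset.sum_congr rfl fun l _ => by rw [B_rowsum hn2 hG]
    rw [h2, ← Finset.sum_sub_distrib]
    refine Finset.sum_congr rfl fun l _ => ?_
    rw [C_eq]
    have : ∑ j, Matrix.diagonal (fun i => 1 - α i) l j = 1 - α l := by
      simp [Matrix.diagonal_apply, Finset.sum_ite_eq]
    rw [this]
    ring
  have hsum : ∑ j, Psi K α (rowNormAdj G) i j
      = (∑ k ∈ Finset.range K, ((∑ j, (B ^ k) i j) - ∑ j, (B ^ (k + 1)) i j))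
        + ∑ j, (B ^ K) i j := by
    simp_rw [Psi_apply]
    rw [Finset.sum_add_distrib]
    congr 1
    rw [Finset.sum_comm]
    exact Finset.sum_congr rfl fun k _ => hf k
  rw [hsum, Finset.sum_range_sub' (f := fun k => ∑ j, (B ^ k) i j)]
  simp [Matrix.one_apply, Finset.sum_ite_eq]

lemma Psi_diag_pos (hK : 1 ≤ K) (hn2 : 2 ≤ n) (hG : G.Connected)
    (hα : ∀ i, α i ∈ Set.Ioo (0 : ℝ) 1) (i : Fin n) :
    0 < Psi K α (rowNormAdj G) i i := by
  rw [Psi_apply]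
  apply add_pos_of_pos_of_nonneg
  · apply Finset.sum_pos'
    · intro k _
      exact mul_nonneg_entries (pow_nonneg_entries (B_nonneg hn2 hG hα) k) (C_nonneg hα) i i
    · refine ⟨0, Finset.mem_range.2 hK, ?_⟩
      rw [pow_zero, one_mul, C_eq, Matrix.diagonal_apply_eq]
      linarith [(hα i).2]
  · exact pow_nonneg_entries (B_nonneg hn2 hG hα) K i i

lemma Psi_adj_pos (hK : 1 ≤ K) (hn2 : 2 ≤ n) (hG : G.Connected)
    (hα : ∀ i, α i ∈ Set.Ioo (0 : ℝ) 1) {i j : Fin n} (h : G.Adj i j) :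
    0 < Psi K α (rowNormAdj G) i j := by
  have hBpos : 0 < (Matrix.diagonal α * rowNormAdj G) i j := by
    rw [Matrix.diagonal_mul]
    exact mul_pos (hα i).1 (W_adj_pos hn2 hG h)
  have hne : i ≠ j := G.ne_of_adj h
  rw [Psi_apply]
  rcases eq_or_lt_of_le hK with hK1 | hK2
  · rw [← hK1]
    rw [Finset.sum_range_one, pow_zero, one_mul, C_eq, Matrix.diagonal_apply_ne _ hne, pow_one]
    simpa using hBpos
  · apply add_pos_of_pos_of_nonneg
    · apply Finset.sum_pos'
      · intro k _
        exact mul_nonneg_entries (pow_nonneg_entries (B_nonneg hn2 hG hα) k) (C_nonneg hα) i j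
      · refine ⟨1, Finset.mem_range.2 hK2, ?_⟩
        rw [pow_one, C_eq, Matrix.mul_diagonal]
        exact mul_pos hBpos (by linarith [(hα j).2])
    · exact pow_nonneg_entries (B_nonneg hn2 hG hα) K i j

end PsiFacts

end ConsensusAux

open ConsensusAux

/-- consensus through performativity.  With `α_i ∈ (0,1)` for all
`i` and stable points `x_PS(β) = (1 − β)(I − βΨ_K)⁻¹ Ψ_K x*`, as `β → 1⁻` the
stable points converge to the constant vector `c*·1` with `c* = yᵀ x*`, where
`y` is the unique entrywise-nonnegative vector with `Ψ_Kᵀ y = y` and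
`Σ_i y_i = 1`. -/
theorem consensus_through_performativity {n : ℕ} (hn : 2 ≤ n)
    (G : SimpleGraph (Fin n)) [DecidableRel G.Adj] (hG : G.Connected)
    (K : ℕ) (hK : 1 ≤ K)
    (α : Fin n → ℝ) (hα : ∀ i, α i ∈ Set.Ioo (0 : ℝ) 1)
    (xstar : Fin n → ℝ) (hx : ∀ i, xstar i ∈ Set.Icc (0 : ℝ) 1) :
    let P := Psi K α (rowNormAdj G)
    let xPS : ℝ → Fin n → ℝ := fun β => (1 - β) • (((1 - β • P)⁻¹ * P) *ᵥ xstar)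
    ∃ c ∈ Set.Icc (0 : ℝ) 1,
      Tendsto xPS (nhdsWithin 1 (Set.Iio 1)) (𝓝 (fun _ => c)) ∧
      (∃! y : Fin n → ℝ, (∀ i, 0 ≤ y i) ∧ Pᵀ *ᵥ y = y ∧ ∑ i, y i = 1) ∧
      (∀ y : Fin n → ℝ, ((∀ i, 0 ≤ y i) ∧ Pᵀ *ᵥ y = y ∧ ∑ i, y i = 1) →
        c = ∑ i, y i * xstar i) := by
  intro P xPS
  haveI : Nonempty (Fin n) := ⟨⟨0, by omega⟩⟩
  have h0 : ∀ i j, 0 ≤ P i j := Psi_nonneg hn hG hα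
  have h1 : ∀ i, ∑ j, P i j = 1 := Psi_rowsum hn hG hα
  have hd : ∀ i, 0 < P i i := fun i => Psi_diag_pos hK hn hG hα i
  have hadj : ∀ i j, G.Adj i j → 0 < P i j := fun i j h => Psi_adj_pos hK hn hG hα h
  have hmpos : ∀ i j, 0 < (P ^ (n - 1)) i j := pow_all_pos hn hG h0 hd hadj
  have hm0 : 0 < n - 1 := by omega
  set ε := Finset.univ.inf' Finset.univ_nonempty
      (fun p : Fin n × Fin n => (P ^ (n - 1)) p.1 p.2) with hε_def
  have hε : 0 < ε := (Finset.lt_inf'_iff _).2 fun p _ => hmpos p.1 p.2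
  have hm : ∀ i j, ε ≤ (P ^ (n - 1)) i j := fun i j =>
    Finset.inf'_le _ (Finset.mem_univ (i, j))
  obtain ⟨y, hynn, hstat, hysum, hmaster⟩ := stationary P h0 h1 (n - 1) hm0 ε hε hm
  set c := ∑ j, y j * xstar j with hc_def
  have hyfix : Pᵀ *ᵥ y = y := by
    funext j
    rw [mulVec_apply]
    simp_rw [Matrix.transpose_apply]
    exact hstat j
  -- coordinatewise limits of powers
  have hcoord : ∀ j i, Tendsto (fun k => (P ^ k) i j) atTop (𝓝 (y j)) := by
    intro j i
    have h2 := tendsto_pi_nhds.1 (hmaster (Pi.single j 1)) i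
    have h3 : (∑ l, y l * (Pi.single j 1 : Fin n → ℝ) l) = y j := by
      simp [Pi.single_apply, mul_ite, Finset.sum_ite_eq']
    rw [h3] at h2
    simpa [Matrix.mulVec_single] using h2
  -- uniqueness of the stationary distribution
  have huniq : ∀ y' : Fin n → ℝ, Pᵀ *ᵥ y' = y' → (∑ i, y' i) = 1 → y' = y := by
    intro y' hfix hsum'
    have hfix' : ∀ j, ∑ i, P i j * y' i = y' j := by
      intro j
      have := congr_fun hfix j
      rw [mulVec_apply] at this
      simpa [Matrix.transpose_apply] using this
    funext j
    have hconst : ∀ k, ∑ i, y' i * (P ^ k) i j = y' j := by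
      intro k
      induction k with
      | zero =>
          simp [Matrix.one_apply, mul_ite, Finset.sum_ite_eq']
      | succ k ih =>
          have hstep : ∑ i, y' i * (P ^ (k + 1)) i j
              = ∑ l, (∑ i, y' i * P i l) * (P ^ k) l j := by
            simp_rw [pow_succ', Matrix.mul_apply, Finset.mul_sum, ← mul_assoc,
              Finset.sum_mul]
            exact Finset.sum_comm
          rw [hstep]
          have : ∀ l, (∑ i, y' i * P i l) = y' l := by
            intro l
            rw [← hfix' l]
            exact Finset.sum_congr rfl fun i _ => mul_comm _ _
          simp_rw [this]
          exact ih
    have ht : Tendsto (fun k => ∑ i, y' i * (P ^ k) i j) atTop (𝓝 (∑ i, y' i * y j)) :=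
      tendsto_finset_sum _ fun i _ => tendsto_const_nhds.mul (hcoord j i)
    have ht' : Tendsto (fun _ : ℕ => y' j) atTop (𝓝 (∑ i, y' i * y j)) :=
      ht.congr fun k => hconst k
    have := tendsto_nhds_unique ht' tendsto_const_nhds
    rw [← this, ← Finset.sum_mul, hsum', one_mul]
  -- the projection matrix and the deflated matrix
  set Pm : Matrix (Fin n) (Fin n) ℝ := Matrix.of (fun _ j => y j) with hPm_def
  have hPmP : Pm * P = Pm := by
    ext i j
    rw [Matrix.mul_apply]
    have : ∀ l, Pm i l * P l j = P l j * y l := fun l => mul_comm _ _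
    simp_rw [hPm_def, Matrix.of_apply]
    calc ∑ l, y l * P l j = ∑ l, P l j * y l :=
          Finset.sum_congr rfl fun l _ => mul_comm _ _
      _ = y j := hstat j
  have hPPm : P * Pm = Pm := by
    ext i j
    rw [Matrix.mul_apply]
    simp_rw [hPm_def, Matrix.of_apply]
    rw [← Finset.sum_mul, h1, one_mul]
  have hPm2 : Pm * Pm = Pm := by
    ext i j
    rw [Matrix.mul_apply]
    simp_rw [hPm_def, Matrix.of_apply]
    rw [← Finset.sum_mul, hysum, one_mul]
  have hPmVec : ∀ w : Fin n → ℝ, Pm *ᵥ w = fun _ => ∑ j, y j * w j := by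
    intro w
    funext i
    rw [mulVec_apply]
    simp [hPm_def]
  set Q : Matrix (Fin n) (Fin n) ℝ := P - Pm with hQ_def
  have hpowPm : ∀ k, P ^ k * Pm = Pm := by
    intro k
    induction k with
    | zero => simp
    | succ k ih => rw [pow_succ, mul_assoc, hPPm, ih]
  have hQpow : ∀ k, Q ^ (k + 1) = P ^ (k + 1) - Pm := by
    intro k
    induction k with
    | zero => simp [hQ_def]
    | succ k ih =>
        rw [pow_succ, ih, hQ_def, Matrix.sub_mul, Matrix.mul_sub, Matrix.mul_sub,
          hpowPm, hPmP, hPm2, ← pow_succ]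
        abel
  have hQlim : ∀ w : Fin n → ℝ, Tendsto (fun k => (Q ^ k) *ᵥ w) atTop (𝓝 0) := by
    intro w
    rw [← tendsto_add_atTop_iff_nat 1]
    have heq : ∀ k, (Q ^ (k + 1)) *ᵥ w = (P ^ (k + 1)) *ᵥ w - Pm *ᵥ w := by
      intro k
      rw [hQpow k, Matrix.sub_mulVec]
    have h2 : Tendsto (fun k => (P ^ (k + 1)) *ᵥ w) atTop (𝓝 (Pm *ᵥ w)) := by
      have := (hmaster w).comp (tendsto_add_atTop_nat 1)
      rw [hPmVec w]
      exact this
    have := h2.sub (tendsto_const_nhds (x := Pm *ᵥ w))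
    rw [sub_self] at this
    exact this.congr fun k => (heq k).symm
  -- determinants are nonzero
  have hdetQ : ∀ β : ℝ, 0 < β → β ≤ 1 → (1 - β • Q).det ≠ 0 := by
    intro β hβ0 hβ1 hdet
    obtain ⟨v, hv0, hv⟩ := (Matrix.exists_mulVec_eq_zero_iff).2 hdet
    have hrec : v = β • (Q *ᵥ v) := by
      rw [Matrix.sub_mulVec, Matrix.one_mulVec, Matrix.smul_mulVec] at hv
      exact (sub_eq_zero.1 hv)
    have hiter : ∀ k, v = (β ^ k) • ((Q ^ k) *ᵥ v) := by
      intro k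
      induction k with
      | zero => simp
      | succ k ih =>
          calc v = β • (Q *ᵥ v) := hrec
            _ = β • (Q *ᵥ ((β ^ k) • ((Q ^ k) *ᵥ v))) := by rw [← ih]
            _ = (β ^ (k + 1)) • ((Q ^ (k + 1)) *ᵥ v) := by
                rw [Matrix.mulVec_smul, Matrix.mulVec_mulVec, ← pow_succ', smul_smul,
                  ← pow_succ']
    have hlim : Tendsto (fun k => (β ^ k) • ((Q ^ k) *ᵥ v)) atTop (𝓝 0) := by
      have hnorm : Tendsto (fun k => ‖(Q ^ k) *ᵥ v‖) atTop (𝓝 0) := by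
        simpa using (hQlim v).norm
      refine squeeze_zero_norm (fun k => ?_) hnorm
      rw [norm_smul]
      have h1' : |β ^ k| ≤ 1 := by
        rw [abs_pow]
        exact pow_le_one₀ (abs_nonneg β) (by rw [abs_of_pos hβ0]; exact hβ1)
      calc ‖β ^ k‖ * ‖(Q ^ k) *ᵥ v‖ ≤ 1 * ‖(Q ^ k) *ᵥ v‖ :=
            mul_le_mul_of_nonneg_right h1' (norm_nonneg _)
        _ = ‖(Q ^ k) *ᵥ v‖ := one_mul _
    exact hv0 (tendsto_nhds_unique (tendsto_const_nhds.congr fun k => hiter k) hlim)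
  have hdetP : ∀ β : ℝ, 0 ≤ β → β < 1 → (1 - β • P).det ≠ 0 := by
    intro β hβ0 hβ1 hdet
    obtain ⟨v, hv0, hv⟩ := (Matrix.exists_mulVec_eq_zero_iff).2 hdet
    have hrec : v = β • (P *ᵥ v) := by
      rw [Matrix.sub_mulVec, Matrix.one_mulVec, Matrix.smul_mulVec] at hv
      exact (sub_eq_zero.1 hv)
    have hiter : ∀ k, v = (β ^ k) • ((P ^ k) *ᵥ v) := by
      intro k
      induction k with
      | zero => simp
      | succ k ih =>
          calc v = β • (P *ᵥ v) := hrec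
            _ = β • (P *ᵥ ((β ^ k) • ((P ^ k) *ᵥ v))) := by rw [← ih]
            _ = (β ^ (k + 1)) • ((P ^ (k + 1)) *ᵥ v) := by
                rw [Matrix.mulVec_smul, Matrix.mulVec_mulVec, ← pow_succ', smul_smul,
                  ← pow_succ']
    have hlim : Tendsto (fun k => (β ^ k) • ((P ^ k) *ᵥ v)) atTop (𝓝 0) := by
      have := (tendsto_pow_atTop_nhds_zero_of_lt_one hβ0 hβ1).smul (hmaster v)
      simpa using this
    exact hv0 (tendsto_nhds_unique (tendsto_const_nhds.congr fun k => hiter k) hlim)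
  -- the resolvent identity
  have hid : ∀ β : ℝ, 0 < β → β < 1 →
      ((1 : ℝ) - β) • (1 - β • P)⁻¹ = ((1 : ℝ) - β) • (1 - β • Q)⁻¹ + β • Pm := by
    intro β hβ0 hβ1
    have hPu : IsUnit (1 - β • P).det := isUnit_iff_ne_zero.2 (hdetP β hβ0.le hβ1)
    have hQu : IsUnit (1 - β • Q).det := isUnit_iff_ne_zero.2 (hdetQ β hβ0 hβ1.le)
    have hQPm : Q * Pm = 0 := by
      rw [hQ_def, Matrix.sub_mul, hPPm, hPm2, sub_self]
    have h1' : (1 - β • Q) * Pm = Pm := by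
      rw [Matrix.sub_mul, Matrix.one_mul, smul_mul_assoc, hQPm, smul_zero, sub_zero]
    have hinvPm : (1 - β • Q)⁻¹ * Pm = Pm := by
      conv_lhs => rw [← h1']
      rw [← mul_assoc, Matrix.nonsing_inv_mul _ hQu, Matrix.one_mul]
    have hsplit : (1 : Matrix (Fin n) (Fin n) ℝ) - β • P = (1 - β • Q) - β • Pm := by
      rw [hQ_def, smul_sub]
      abel
    have hmul : (((1 : ℝ) - β) • (1 - β • Q)⁻¹ + β • Pm) * (1 - β • P)
        = ((1 : ℝ) - β) • (1 : Matrix (Fin n) (Fin n) ℝ) := by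
      rw [Matrix.add_mul, smul_mul_assoc, smul_mul_assoc]
      have e1 : (1 - β • Q)⁻¹ * (1 - β • P) = 1 - β • Pm := by
        rw [hsplit, Matrix.mul_sub, Matrix.nonsing_inv_mul _ hQu, mul_smul_comm, hinvPm]
      have e2 : Pm * (1 - β • P) = ((1 : ℝ) - β) • Pm := by
        rw [Matrix.mul_sub, Matrix.mul_one, mul_smul_comm, hPmP, sub_smul, one_smul]
      rw [e1, e2, smul_sub, smul_smul, smul_smul, mul_comm β ((1:ℝ) - β)]
      abel
    have hmulL : (((1 : ℝ) - β) • (1 - β • P)⁻¹) * (1 - β • P)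
        = ((1 : ℝ) - β) • (1 : Matrix (Fin n) (Fin n) ℝ) := by
      rw [smul_mul_assoc, Matrix.nonsing_inv_mul _ hPu]
    have := hmulL.trans hmul.symm
    have h2 := congrArg (fun X => X * (1 - β • P)⁻¹) this
    simpa [mul_assoc, Matrix.mul_nonsing_inv _ hPu] using h2
  have hcIcc : c ∈ Set.Icc (0:ℝ) 1 := by
    constructor
    · exact Finset.sum_nonneg fun j _ => mul_nonneg (hynn j) (hx j).1
    · calc (∑ j, y j * xstar j) ≤ ∑ j, y j * 1 :=
          Finset.sum_le_sum fun j _ => mul_le_mul_of_nonneg_left (hx j).2 (hynn j)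
        _ = 1 := by simp [hysum]
  have hPmx : Pm *ᵥ xstar = fun _ => c := by rw [hPmVec]
  have hexp : ∀ β : ℝ, 0 < β → β < 1 →
      xPS β = (1 - β) • ((1 - β • Q)⁻¹ *ᵥ (P *ᵥ xstar)) + β • (fun _ => c) := by
    intro β hβ0 hβ1
    show (1 - β) • (((1 - β • P)⁻¹ * P) *ᵥ xstar) = _
    rw [← Matrix.smul_mulVec, ← smul_mul_assoc, hid β hβ0 hβ1,
      Matrix.add_mul, smul_mul_assoc, smul_mul_assoc, hPmP,
      Matrix.add_mulVec, Matrix.smul_mulVec, Matrix.smul_mulVec,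
      ← Matrix.mulVec_mulVec, hPmx]
  have hdet1 : (1 - (1:ℝ) • Q).det ≠ 0 := hdetQ 1 one_pos le_rfl
  have hfc : Continuous (fun β : ℝ => (1 : Matrix (Fin n) (Fin n) ℝ) - β • Q) :=
    continuous_const.sub (continuous_id.smul continuous_const)
  have hcinv : ContinuousAt (fun β : ℝ => ((1 : Matrix (Fin n) (Fin n) ℝ) - β • Q)⁻¹) 1 := by
    have heq : (fun β : ℝ => ((1 : Matrix (Fin n) (Fin n) ℝ) - β • Q)⁻¹)
        = fun β => ((1 - β • Q).det)⁻¹ • (1 - β • Q).adjugate := by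
      funext β
      rw [Matrix.inv_def, Ring.inverse_eq_inv]
    rw [heq]
    exact (hfc.matrix_det.continuousAt.inv₀ hdet1).smul hfc.matrix_adjugate.continuousAt
  have hmv : Continuous (fun M : Matrix (Fin n) (Fin n) ℝ => M *ᵥ (P *ᵥ xstar)) :=
    continuous_id.matrix_mulVec continuous_const
  have hvlim : Tendsto (fun β : ℝ => ((1 : Matrix (Fin n) (Fin n) ℝ) - β • Q)⁻¹ *ᵥ (P *ᵥ xstar))
      (nhdsWithin 1 (Set.Iio 1)) (𝓝 ((1 - (1:ℝ) • Q)⁻¹ *ᵥ (P *ᵥ xstar))) := by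
    have h3 := (hmv.continuousAt.comp hcinv).tendsto
    exact h3.mono_left nhdsWithin_le_nhds
  have h1b : Tendsto (fun β : ℝ => 1 - β) (nhdsWithin 1 (Set.Iio 1)) (𝓝 0) := by
    have h3 : Tendsto (fun β : ℝ => 1 - β) (𝓝 1) (𝓝 (1 - 1)) :=
      (continuous_const.sub continuous_id).tendsto 1
    simpa using h3.mono_left nhdsWithin_le_nhds
  have hβid : Tendsto (fun β : ℝ => β) (nhdsWithin 1 (Set.Iio 1)) (𝓝 1) :=
    tendsto_id.mono_left nhdsWithin_le_nhds
  have hlim2 : Tendsto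
      (fun β : ℝ => (1 - β) • ((1 - β • Q)⁻¹ *ᵥ (P *ᵥ xstar)) + β • (fun _ => c))
      (nhdsWithin 1 (Set.Iio 1)) (𝓝 (fun _ => c)) := by
    have h3 := (h1b.smul hvlim).add (hβid.smul (tendsto_const_nhds (x := fun _ : Fin n => c)))
    simpa using h3
  have hev : ∀ᶠ β in nhdsWithin 1 (Set.Iio 1),
      xPS β = (1 - β) • ((1 - β • Q)⁻¹ *ᵥ (P *ᵥ xstar)) + β • (fun _ => c) := by
    have hIoi : Set.Ioi (0:ℝ) ∈ nhdsWithin 1 (Set.Iio 1) :=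
      nhdsWithin_le_nhds (isOpen_Ioi.mem_nhds (by norm_num))
    have hIio : Set.Iio (1:ℝ) ∈ nhdsWithin 1 (Set.Iio 1) := self_mem_nhdsWithin
    filter_upwards [hIoi, hIio] with β hβ0 hβ1
    exact hexp β hβ0 hβ1
  have htendsto : Tendsto xPS (nhdsWithin 1 (Set.Iio 1)) (𝓝 (fun _ => c)) :=
    Tendsto.congr' (EventuallyEq.symm hev) hlim2
  refine ⟨c, hcIcc, htendsto, ?_, ?_⟩
  · exact ⟨y, ⟨hynn, hyfix, hysum⟩, fun y' h' => huniq y' h'.2.1 h'.2.2⟩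
  · intro y' h'
    rw [huniq y' h'.2.1 h'.2.2]
end

section
/- (Consensus under the DeGroot model with perfect prediction.) Suppose W is primitive, and let W^∞ = lim_{t→∞} W^t (which exists). For any platform susceptibilities β_1,…,β_n ∈ [0,1] and any innate opinions x* ∈ [0,1]^n, the dynamics x^{(0)} = x*, x^{(t+1)} = W^∞((I − Λ_β)x* + Λ_β x^{(t)}) converge to a limit x_PS, and x_PS is a consensus: there exists d* ∈ [0,1] with (x_PS)_i = d* for all i ∈ {1,…,n}. -/
open Matrix Filter Topology

/-- A nonnegative square matrix is primitive: some power is entrywise strictly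
positive. -/
def IsPrimitiveMat {n : ℕ} (M : Matrix (Fin n) (Fin n) ℝ) : Prop :=
  ∃ m : ℕ, 1 ≤ m ∧ ∀ i j, 0 < (M ^ m) i j

lemma const_of_fix {n : ℕ} (P : Matrix (Fin n) (Fin n) ℝ)
    (hpos : ∀ i j, 0 < P i j) (hrow : ∀ i, ∑ j, P i j = 1)
    (v : Fin n → ℝ) (hfix : P *ᵥ v = v) (i j : Fin n) (hi : i ∈ Finset.univ) :
    v i = v j := by
  obtain ⟨i0, -, hi0⟩ := Finset.exists_max_image Finset.univ v ⟨i, hi⟩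
  suffices h : ∀ k, v k = v i0 by rw [h i, h j]
  intro k
  by_contra hk
  have hklt : v k < v i0 := lt_of_le_of_ne (hi0 k (Finset.mem_univ k)) hk
  have h1 : v i0 = ∑ l, P i0 l * v l := by
    conv_lhs => rw [← hfix]
    simp [Matrix.mulVec, dotProduct]
  have h2 : ∑ l, P i0 l * v l < ∑ l, P i0 l * v i0 :=
    Finset.sum_lt_sum (fun l _ => mul_le_mul_of_nonneg_left (hi0 l (Finset.mem_univ l)) (hpos i0 l).le)
      ⟨k, Finset.mem_univ k, mul_lt_mul_of_pos_left hklt (hpos i0 k)⟩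
  rw [← Finset.sum_mul, hrow, one_mul] at h2
  linarith

/-- consensus under the DeGroot model with perfect prediction.
If `W` is primitive with `W^∞ = lim W^t`, the dynamics
`x^{(t+1)} = W^∞((I − Λ_β)x* + Λ_β x^{(t)})` converge to a consensus vector
`d*·1` with `d* ∈ [0,1]`. -/
theorem degroot_consensus {n : ℕ} (hn : 2 ≤ n) (G : SimpleGraph (Fin n))
    [DecidableRel G.Adj] (hG : G.Connected)
    (hprim : IsPrimitiveMat (rowNormAdj G))
    (Winf : Matrix (Fin n) (Fin n) ℝ)
    (hWinf : ∀ i j, Tendsto (fun t => ((rowNormAdj G) ^ t) i j) atTop (𝓝 (Winf i j)))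
    (β : Fin n → ℝ) (hβ : ∀ i, β i ∈ Set.Icc (0 : ℝ) 1)
    (xstar : Fin n → ℝ) (hx : ∀ i, xstar i ∈ Set.Icc (0 : ℝ) 1)
    (x : ℕ → Fin n → ℝ) (hx0 : x 0 = xstar)
    (hrec : ∀ t, x (t + 1) = Winf *ᵥ
      ((1 - Matrix.diagonal β) *ᵥ xstar + Matrix.diagonal β *ᵥ x t)) :
    ∃ xPS : Fin n → ℝ, Tendsto x atTop (𝓝 xPS) ∧
      ∃ dstar ∈ Set.Icc (0 : ℝ) 1, ∀ i, xPS i = dstar := by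
  set W := rowNormAdj G with hW
  obtain ⟨m, hm1, hmpos⟩ := hprim
  have i0 : Fin n := ⟨0, by omega⟩
  -- degrees are positive
  have hdeg : ∀ i, (0 : ℝ) < (G.degree i : ℝ) := by
    intro i
    rcases lt_or_eq_of_le (Nat.cast_nonneg (G.degree i) : (0:ℝ) ≤ _) with h | h
    · exact h
    · exfalso
      have hd0 : (G.degree i : ℝ) = 0 := h.symm
      have hzero : ∀ k, W i k = 0 := by
        intro k
        show (G.adjMatrix ℝ) i k / (G.degree i : ℝ) = 0
        rw [hd0, div_zero]
      have : (W ^ m) i i = 0 := by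
        obtain ⟨m', rfl⟩ : ∃ m', m = m' + 1 := ⟨m - 1, by omega⟩
        rw [pow_succ', Matrix.mul_apply]
        simp [hzero]
      exact absurd this (ne_of_gt (hmpos i i))
  -- W is nonnegative with row sums one
  have hWnn : ∀ i j, 0 ≤ W i j := by
    intro i j
    apply div_nonneg _ (Nat.cast_nonneg _)
    simp [SimpleGraph.adjMatrix_apply]
    split <;> norm_num
  have hWrow : ∀ i, ∑ j, W i j = 1 := by
    intro i
    simp only [hW, rowNormAdj, Matrix.of_apply]
    rw [← Finset.sum_div]
    rw [div_eq_one_iff_eq (ne_of_gt (hdeg i))]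
    have h := SimpleGraph.adjMatrix_mulVec_const_apply (α := ℝ) (G := G) (a := 1) (v := i)
    simp only [Matrix.mulVec, dotProduct, Function.const, mul_one] at h
    rw [h]
  -- powers of W
  have hWpownn : ∀ t i j, 0 ≤ (W ^ t) i j := by
    intro t
    induction t with
    | zero => intro i j; by_cases h : i = j <;> simp [h, Matrix.one_apply]
    | succ t ih =>
      intro i j
      rw [pow_succ, Matrix.mul_apply]
      exact Finset.sum_nonneg fun k _ => mul_nonneg (ih i k) (hWnn k j)
  have hWpowrow : ∀ t i, ∑ j, (W ^ t) i j = 1 := by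
    intro t
    induction t with
    | zero => intro i; simp [Matrix.one_apply]
    | succ t ih =>
      intro i
      simp only [pow_succ, Matrix.mul_apply]
      rw [Finset.sum_comm]
      simp only [← Finset.mul_sum, hWrow, mul_one]
      exact ih i
  -- Winf properties
  have hWinfnn : ∀ i j, 0 ≤ Winf i j := fun i j =>
    ge_of_tendsto (hWinf i j) (Eventually.of_forall fun t => hWpownn t i j)
  have hWinfrow : ∀ i, ∑ j, Winf i j = 1 := by
    intro i
    have h1 : Tendsto (fun t => ∑ j, (W ^ t) i j) atTop (𝓝 (∑ j, Winf i j)) :=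
      tendsto_finset_sum _ fun j _ => hWinf i j
    have h2 : (fun t => ∑ j, (W ^ t) i j) = fun _ => (1 : ℝ) := funext fun t => hWpowrow t i
    rw [h2] at h1
    exact tendsto_nhds_unique h1 tendsto_const_nhds
  -- W * Winf = Winf
  have hWWinf : W * Winf = Winf := by
    ext i j
    have h1 : Tendsto (fun t => (W ^ (t + 1)) i j) atTop (𝓝 (Winf i j)) :=
      (hWinf i j).comp (tendsto_add_atTop_nat 1)
    have h2 : (fun t => (W ^ (t + 1)) i j) = fun t => ∑ k, W i k * (W ^ t) k j := by
      funext t; rw [pow_succ', Matrix.mul_apply]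
    have h3 : Tendsto (fun t => ∑ k, W i k * (W ^ t) k j) atTop
        (𝓝 (∑ k, W i k * Winf k j)) :=
      tendsto_finset_sum _ fun k _ => (hWinf k j).const_mul _
    rw [h2] at h1
    rw [Matrix.mul_apply]
    exact tendsto_nhds_unique h3 h1
  have hWmWinf : ∀ s, W ^ s * Winf = Winf := by
    intro s
    induction s with
    | zero => simp
    | succ s ih => rw [pow_succ', Matrix.mul_assoc, ih, hWWinf]
  -- columns of Winf are constant
  have hWmrow : ∀ i, ∑ j, (W ^ m) i j = 1 := hWpowrow m
  have hcols : ∀ j i, Winf i j = Winf i0 j := by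
    intro j i
    apply const_of_fix (W ^ m) hmpos hWmrow (fun k => Winf k j) _ i i0 (Finset.mem_univ i)
    funext i'
    have := congrFun (congrFun (hWmWinf m) i') j
    simpa [Matrix.mul_apply, Matrix.mulVec, dotProduct] using this
  set π : Fin n → ℝ := fun j => Winf i0 j with hπ
  have hπnn : ∀ j, 0 ≤ π j := fun j => hWinfnn i0 j
  have hπsum : ∑ j, π j = 1 := hWinfrow i0
  -- the iterates
  have hconst : ∀ t i, x (t + 1) i = ∑ j, π j * ((1 - β j) * xstar j + β j * x t j) := by
    intro t i
    have hu : ((1 - Matrix.diagonal β) *ᵥ xstar + Matrix.diagonal β *ᵥ x t)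
        = fun j => (1 - β j) * xstar j + β j * x t j := by
      funext j
      simp only [Pi.add_apply, Matrix.sub_mulVec, Matrix.one_mulVec, Pi.sub_apply,
        Matrix.mulVec_diagonal]
      ring
    rw [hrec t, hu]
    simp only [Matrix.mulVec, dotProduct]
    exact Finset.sum_congr rfl fun j _ => by rw [hcols j i]
  set c : ℕ → ℝ := fun t => x t i0 with hc
  have hxc : ∀ t i, x (t + 1) i = c (t + 1) := by
    intro t i
    rw [hconst t i, hc]
    simp only
    rw [hconst t i0]
  set a : ℝ := ∑ j, π j * ((1 - β j) * xstar j) with ha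
  set r : ℝ := ∑ j, π j * β j with hr
  have hrecc : ∀ t, c (t + 2) = a + r * c (t + 1) := by
    intro t
    have : c (t + 2) = ∑ j, π j * ((1 - β j) * xstar j + β j * x (t + 1) j) := hconst (t+1) i0
    rw [this]
    have heq : ∀ j, π j * ((1 - β j) * xstar j + β j * x (t + 1) j)
        = π j * ((1 - β j) * xstar j) + (π j * β j) * c (t + 1) := by
      intro j; rw [hxc t j]; ring
    rw [Finset.sum_congr rfl fun j _ => heq j, Finset.sum_add_distrib, ← Finset.sum_mul]
  -- bounds
  have hrnn : 0 ≤ r := Finset.sum_nonneg fun j _ => mul_nonneg (hπnn j) (hβ j).1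
  have hann : 0 ≤ a := Finset.sum_nonneg fun j _ =>
    mul_nonneg (hπnn j) (mul_nonneg (by linarith [(hβ j).2]) (hx j).1)
  have har1 : a + r ≤ 1 := by
    have key : ∀ j, π j * ((1 - β j) * xstar j) + π j * β j ≤ π j := by
      intro j
      nlinarith [mul_nonneg (hπnn j) (sub_nonneg.mpr (hβ j).2), (hx j).1, (hx j).2,
        mul_le_mul_of_nonneg_left (hx j).2 (mul_nonneg (hπnn j) (sub_nonneg.mpr (hβ j).2))]
    calc a + r = ∑ j, (π j * ((1 - β j) * xstar j) + π j * β j) := by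
          rw [ha, hr, ← Finset.sum_add_distrib]
      _ ≤ ∑ j, π j := Finset.sum_le_sum fun j _ => key j
      _ = 1 := hπsum
  have hr1 : r ≤ 1 := by linarith
  -- c 1 bounds
  have hc1 : c 1 = ∑ j, π j * xstar j := by
    have := hconst 0 i0
    rw [hx0] at this
    rw [hc]; simp only; rw [this]
    apply Finset.sum_congr rfl
    intro j _; ring
  have hc1nn : 0 ≤ c 1 := by
    rw [hc1]; exact Finset.sum_nonneg fun j _ => mul_nonneg (hπnn j) (hx j).1
  have hc1le : c 1 ≤ 1 := by
    rw [hc1, ← hπsum]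
    exact Finset.sum_le_sum fun j _ => by
      nlinarith [hπnn j, (hx j).2]
  -- the limit
  set L : ℝ := if r < 1 then a / (1 - r) else c 1 with hLdef
  have hL : a + r * L = L := by
    by_cases h : r < 1
    · have h0 : (1 : ℝ) - r ≠ 0 := by linarith
      rw [hLdef, if_pos h]
      field_simp
      ring
    · have hre : r = 1 := le_antisymm hr1 (not_lt.mp h)
      have ha0 : a = 0 := le_antisymm (by linarith) hann
      rw [hLdef, if_neg h, ha0, hre]; ring
  have hL01 : L ∈ Set.Icc (0 : ℝ) 1 := by
    by_cases h : r < 1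
    · rw [hLdef, if_pos h]
      constructor
      · exact div_nonneg hann (by linarith)
      · rw [div_le_one (by linarith)]; linarith
    · rw [hLdef, if_neg h]; exact ⟨hc1nn, hc1le⟩
  have hgeo : ∀ k, c (1 + k) = L + r ^ k * (c 1 - L) := by
    intro k
    induction k with
    | zero => simp
    | succ k ih =>
      have h1 : 1 + (k + 1) = (k + 2) := by ring
      have h2 : 1 + k = k + 1 := by ring
      rw [h1, hrecc k, ← h2, ih]
      ring_nf
      nlinarith [hL]
  have hclim : Tendsto (fun k => c (1 + k)) atTop (𝓝 L) := by
    have hpow : Tendsto (fun k => r ^ k * (c 1 - L)) atTop (𝓝 0) := by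
      by_cases h : r < 1
      · have := (tendsto_pow_atTop_nhds_zero_of_lt_one hrnn h).mul_const (c 1 - L)
        simpa using this
      · have hce : c 1 - L = 0 := by rw [hLdef, if_neg h]; ring
        simp [hce]
      
    have := (tendsto_const_nhds (x := L) (f := atTop (α := ℕ))).add hpow
    rw [add_zero] at this
    exact Tendsto.congr (fun k => (hgeo k).symm) this
  have hctend : Tendsto c atTop (𝓝 L) := by
    rw [← tendsto_add_atTop_iff_nat 1]
    exact hclim.congr (fun k => by rw [add_comm])
  refine ⟨fun _ => L, ?_, L, hL01, fun i => rfl⟩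
  rw [tendsto_pi_nhds]
  intro i
  apply hctend.congr'
  rw [EventuallyEq, eventually_atTop]
  refine ⟨1, fun t ht => ?_⟩
  obtain ⟨s, rfl⟩ := Nat.exists_eq_add_of_le ht
  rw [add_comm 1 s]
  exact (hxc s i).symm
end
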